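/- arXiv:2512.12991 — 6 statements merged into one kernel-verified Lean document; each statement's English description precedes it below -/
import Mathlib

section
/- There exists a constant C > 0 such that A_{Φ₁,Φ₂,ℓ}(t,x,y) ≤ C for all t ≥ 0 and all x, y ∈ D with x ≠ y. -/
open Set Metric MeasureTheory Real Filter Topology

noncomputable section

/-- `f` satisfies the lower scaling condition at zero with index `b`. -/
def HasLowerScaling (f : ℝ → ℝ) (b : ℝ) : Prop :=
  ∃ C : ℝ, 1 ≤ C ∧ ∀ s r : ℝ, 0 < s → s ≤ r → r ≤ 1 → C⁻¹ * (r / s) ^ b ≤ f r / f s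

/-- `f` satisfies the upper scaling condition at zero with index `b`. -/
def HasUpperScaling (f : ℝ → ℝ) (b : ℝ) : Prop :=
  ∃ C : ℝ, 1 ≤ C ∧ ∀ s r : ℝ, 0 < s → s ≤ r → r ≤ 1 → f r / f s ≤ C * (r / s) ^ b

/-- The lower Matuszewska index of `f` at zero equals `β`,
i.e. `β` is the supremum of the indices for which the lower scaling condition holds. -/
def LowerIndexIs (f : ℝ → ℝ) (β : ℝ) : Prop :=
  (∀ b : ℝ, b < β → HasLowerScaling f b) ∧ (∀ b : ℝ, β < b → ¬ HasLowerScaling f b)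

/-- The upper Matuszewska index of `f` at zero equals `β`,
i.e. `β` is the infimum of the indices for which the upper scaling condition holds. -/
def UpperIndexIs (f : ℝ → ℝ) (β : ℝ) : Prop :=
  (∀ b : ℝ, β < b → HasUpperScaling f b) ∧ (∀ b : ℝ, b < β → ¬ HasUpperScaling f b)

/-- `f` is almost increasing on `(0,1]`. -/
def AlmostIncreasingOn01 (f : ℝ → ℝ) : Prop :=
  ∃ C : ℝ, 1 ≤ C ∧ ∀ s r : ℝ, 0 < s → s ≤ r → r ≤ 1 → f s ≤ C * f r

/-- `f` is almost decreasing on `(0,1]`. -/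
def AlmostDecreasingOn01 (f : ℝ → ℝ) : Prop :=
  ∃ C : ℝ, 1 ≤ C ∧ ∀ s r : ℝ, 0 < s → s ≤ r → r ≤ 1 → f r ≤ C * f s

/-- A positive Borel function on `(0,∞)`, equal to `1` on `[1,∞)`. -/
def StdFun (f : ℝ → ℝ) : Prop :=
  Measurable f ∧ (∀ r : ℝ, 0 < r → 0 < f r) ∧ (∀ r : ℝ, 1 ≤ r → f r = 1)

/-- The scaling condition for the slowly varying factor `ℓ`, with parameters `β₁, β₂`. -/
def EllScaling (l : ℝ → ℝ) (β₁ β₂ : ℝ) : Prop :=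
  ∀ ε : ℝ, 0 < ε → ∃ C : ℝ, 1 ≤ C ∧ ∀ s r : ℝ, 0 < s → s ≤ r → r ≤ 1 →
    C⁻¹ * (r / s) ^ (-(min ε β₁)) ≤ l r / l s ∧ l r / l s ≤ C * (r / s) ^ (min ε β₂)

/-- `l` has both Matuszewska indices at zero equal to `0`. -/
def SlowlyVaryingScaling (l : ℝ → ℝ) : Prop :=
  ∀ ε : ℝ, 0 < ε → ∃ C : ℝ, 1 ≤ C ∧ ∀ s r : ℝ, 0 < s → s ≤ r → r ≤ 1 →
    C⁻¹ * (r / s) ^ (-ε) ≤ l r / l s ∧ l r / l s ≤ C * (r / s) ^ ε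

/-- The distance to the boundary of `D`. -/
def dd {d : ℕ} (D : Set (EuclideanSpace ℝ (Fin d))) (x : EuclideanSpace ℝ (Fin d)) : ℝ :=
  Metric.infDist x (frontier D)

/-- The function `A_{f,g,h}(t,x,y)`. -/
def Afun {d : ℕ} (α : ℝ) (D : Set (EuclideanSpace ℝ (Fin d))) (f g h : ℝ → ℝ)
    (t : ℝ) (x y : EuclideanSpace ℝ (Fin d)) : ℝ :=
  f (max (min (dd D x) (dd D y)) (t ^ (1 / α)) / dist x y) *
  g (max (max (dd D x) (dd D y)) (t ^ (1 / α)) / dist x y) *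
  h (max (min (dd D x) (dd D y)) (t ^ (1 / α)) /
      min (max (max (dd D x) (dd D y)) (t ^ (1 / α))) (dist x y))

/-- The inward unit vector `𝐧ₓ = (x - Qₓ)/δ_D(x)`. -/
def nv {d : ℕ} (D : Set (EuclideanSpace ℝ (Fin d)))
    (Q : EuclideanSpace ℝ (Fin d) → EuclideanSpace ℝ (Fin d))
    (x : EuclideanSpace ℝ (Fin d)) : EuclideanSpace ℝ (Fin d) :=
  (dd D x)⁻¹ • (x - Q x)

/-- `∫_a^b A_{f,g,h}(t,x,x+u𝐧ₓ) A_{f,g,h}(t,x+u𝐧ₓ,y) u^{-α-1} du`. -/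
def Iint {d : ℕ} (α : ℝ) (D : Set (EuclideanSpace ℝ (Fin d)))
    (Q : EuclideanSpace ℝ (Fin d) → EuclideanSpace ℝ (Fin d))
    (f g h : ℝ → ℝ) (a b t : ℝ) (x y : EuclideanSpace ℝ (Fin d)) : ℝ :=
  ∫ u in Set.Ioo a b,
    Afun α D f g h t x (x + u • nv D Q x) * Afun α D f g h t (x + u • nv D Q x) y *
      u ^ (-α - 1)

/-- `∫_a^b f₀(k₂/u) f₂(u/rr) l(k₁/u) u^{-α-1} du`. -/
def Jint (α : ℝ) (f₀ f₂ l : ℝ → ℝ) (a b rr k₁ k₂ : ℝ) : ℝ :=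
  ∫ u in Set.Ioo a b, f₀ (k₂ / u) * f₂ (u / rr) * l (k₁ / u) * u ^ (-α - 1)

/-- A standard almost increasing function is globally bounded on `(0,∞)`. -/
lemma stdfun_bdd (f : ℝ → ℝ) (hf : StdFun f) (hinc : AlmostIncreasingOn01 f) :
    ∃ C : ℝ, 1 ≤ C ∧ ∀ s : ℝ, 0 < s → f s ≤ C := by
  obtain ⟨C, hC1, hC⟩ := hinc
  refine ⟨C, hC1, fun s hs => ?_⟩
  rcases le_or_gt s 1 with h | h
  · have := hC s 1 hs h le_rfl
    rwa [hf.2.2 1 le_rfl, mul_one] at this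
  · rw [hf.2.2 s h.le]; exact hC1

/-- The product `Φ₁(s) ℓ(s)` is bounded on `(0,1]`. -/
lemma prod_same_pt_bdd (β₁ β₂ : ℝ) (hβ₁ : 0 ≤ β₁) (Φ₁ l : ℝ → ℝ)
    (hΦ₁ : StdFun Φ₁) (hΦ₁inc : AlmostIncreasingOn01 Φ₁)
    (hΦ₁low : LowerIndexIs Φ₁ β₁) (hl : StdFun l) (hlscale : EllScaling l β₁ β₂) :
    ∃ K : ℝ, 0 < K ∧ ∀ s : ℝ, 0 < s → s ≤ 1 → Φ₁ s * l s ≤ K := by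
  rcases eq_or_lt_of_le hβ₁ with h0 | hpos
  · -- β₁ = 0 : l is bounded, Φ₁ is bounded
    obtain ⟨CA, hCA1, hCA⟩ := stdfun_bdd Φ₁ hΦ₁ hΦ₁inc
    obtain ⟨Cl, hCl1, hCl⟩ := hlscale 1 one_pos
    refine ⟨CA * Cl, by positivity, fun s hs hs1 => ?_⟩
    have hls0 : 0 < l s := hl.2.1 s hs
    have h := (hCl s 1 hs hs1 le_rfl).1
    rw [hl.2.2 1 le_rfl, ← h0, min_eq_right (le_of_lt one_pos), neg_zero, Real.rpow_zero, mul_one] at h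
    have hCl0 : (0:ℝ) < Cl := by linarith
    have hls : l s ≤ Cl := by
      rw [le_div_iff₀ hls0] at h
      have h2 := mul_le_mul_of_nonneg_left h hCl0.le
      rwa [← mul_assoc, mul_inv_cancel₀ hCl0.ne', one_mul, mul_one] at h2
    have hΦ1s0 : 0 ≤ Φ₁ s := (hΦ₁.2.1 s hs).le
    exact mul_le_mul (hCA s hs) hls hls0.le (by linarith)
  · -- β₁ > 0 : use lower scaling of Φ₁ and the scaling of l with ε = β₁/2
    set m : ℝ := β₁ / 2 with hm
    obtain ⟨Cp, hCp1, hCp⟩ := hΦ₁low.1 m (by simp only [hm]; linarith)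
    obtain ⟨Cl, hCl1, hCl⟩ := hlscale m (by simp only [hm]; linarith)
    refine ⟨Cp * Cl, by positivity, fun s hs hs1 => ?_⟩
    have hP : 0 < Φ₁ s := hΦ₁.2.1 s hs
    have hL : 0 < l s := hl.2.1 s hs
    have hCp0 : (0:ℝ) < Cp := by linarith
    have hCl0 : (0:ℝ) < Cl := by linarith
    have hX0 : (0:ℝ) < (1 / s) ^ m := by positivity
    have hY0 : (0:ℝ) < (1 / s) ^ (-m) := by positivity
    have hXY : (1 / s) ^ m * (1 / s) ^ (-m) = 1 := by
      rw [← Real.rpow_add (by positivity), add_neg_cancel, Real.rpow_zero]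
    have hp := hCp s 1 hs hs1 le_rfl
    rw [hΦ₁.2.2 1 le_rfl] at hp
    have hXP : (1 / s) ^ m * Φ₁ s ≤ Cp := by
      rw [le_div_iff₀ hP] at hp
      calc (1 / s) ^ m * Φ₁ s = Cp * (Cp⁻¹ * (1 / s) ^ m * Φ₁ s) := by
            field_simp
        _ ≤ Cp * 1 := mul_le_mul_of_nonneg_left hp hCp0.le
        _ = Cp := mul_one _
    have hq := (hCl s 1 hs hs1 le_rfl).1
    rw [hl.2.2 1 le_rfl, min_eq_left (by simp only [hm]; linarith)] at hq
    have hYL : (1 / s) ^ (-m) * l s ≤ Cl := by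
      rw [le_div_iff₀ hL] at hq
      calc (1 / s) ^ (-m) * l s = Cl * (Cl⁻¹ * (1 / s) ^ (-m) * l s) := by
            field_simp
        _ ≤ Cl * 1 := mul_le_mul_of_nonneg_left hq hCl0.le
        _ = Cl := mul_one _
    calc Φ₁ s * l s = ((1 / s) ^ m * Φ₁ s) * ((1 / s) ^ (-m) * l s) := by
          have : ((1 / s) ^ m * Φ₁ s) * ((1 / s) ^ (-m) * l s)
              = ((1 / s) ^ m * (1 / s) ^ (-m)) * (Φ₁ s * l s) := by ring
          rw [this, hXY, one_mul]
      _ ≤ Cp * Cl := mul_le_mul hXP hYL (by positivity) hCp0.le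

/-- The product `Φ₁(a) ℓ(c)` is bounded whenever `0 < a ≤ c`. -/
lemma prod_bdd (β₁ β₂ : ℝ) (hβ₁ : 0 ≤ β₁) (Φ₁ l : ℝ → ℝ)
    (hΦ₁ : StdFun Φ₁) (hΦ₁inc : AlmostIncreasingOn01 Φ₁)
    (hΦ₁low : LowerIndexIs Φ₁ β₁) (hl : StdFun l) (hlscale : EllScaling l β₁ β₂) :
    ∃ C : ℝ, 0 < C ∧ ∀ a c : ℝ, 0 < a → a ≤ c → Φ₁ a * l c ≤ C := by
  obtain ⟨CA, hCA1, hCA⟩ := stdfun_bdd Φ₁ hΦ₁ hΦ₁inc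
  obtain ⟨K, hK0, hK⟩ := prod_same_pt_bdd β₁ β₂ hβ₁ Φ₁ l hΦ₁ hΦ₁inc hΦ₁low hl hlscale
  obtain ⟨Ci, hCi1, hCi⟩ := hΦ₁inc
  refine ⟨max CA (Ci * K), lt_of_lt_of_le (by linarith) (le_max_left _ _),
    fun a c ha hac => ?_⟩
  by_cases hc : 1 ≤ c
  · rw [hl.2.2 c hc, mul_one]
    exact (hCA a ha).trans (le_max_left _ _)
  · push_neg at hc
    have hc0 : 0 < c := ha.trans_le hac
    have hLc : 0 < l c := hl.2.1 c hc0
    have h1 : Φ₁ a * l c ≤ Ci * Φ₁ c * l c :=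
      mul_le_mul_of_nonneg_right (hCi a c ha hac hc.le) hLc.le
    have h2 : Ci * Φ₁ c * l c = Ci * (Φ₁ c * l c) := by ring
    have h3 : Ci * (Φ₁ c * l c) ≤ Ci * K :=
      mul_le_mul_of_nonneg_left (hK c hc0 hc.le) (by linarith)
    exact (h1.trans_eq h2).trans (h3.trans (le_max_right _ _))

/-- Positivity of the boundary distance inside a bounded open set. -/
lemma dd_pos {d : ℕ} (hd : 2 ≤ d) (D : Set (EuclideanSpace ℝ (Fin d)))
    (hDopen : IsOpen D) (hDbdd : Bornology.IsBounded D)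
    {x : EuclideanSpace ℝ (Fin d)} (hx : x ∈ D) : 0 < dd D x := by
  haveI : Nonempty (Fin d) := ⟨⟨0, by omega⟩⟩
  have hne : (frontier D).Nonempty := by
    rcases (frontier D).eq_empty_or_nonempty with h | h
    · exfalso
      rcases isClopen_iff.mp (isClopen_iff_frontier_eq_empty.mpr h) with rfl | rfl
      · exact hx
      · exact NormedSpace.unbounded_univ ℝ (EuclideanSpace ℝ (Fin d)) hDbdd
    · exact h
  have hxnot : x ∉ frontier D := by
    rw [hDopen.frontier_eq]
    exact fun h => h.2 hx
  exact (isClosed_frontier.notMem_iff_infDist_pos hne).mp hxnot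

/-- There exists a constant `C > 0` such that `A_{Φ₁,Φ₂,ℓ}(t,x,y) ≤ C`
for all `t ≥ 0` and all `x, y ∈ D` with `x ≠ y`. -/
theorem statement_0
    (d : ℕ) (hd : 2 ≤ d)
    (D : Set (EuclideanSpace ℝ (Fin d))) (hDopen : IsOpen D)
    (hDbdd : Bornology.IsBounded D)
    (α β₁ β₁s β₂ β₂s : ℝ) (hα0 : 0 < α) (hα2 : α < 2)
    (hβ₁ : 0 ≤ β₁) (hβ₁s : β₁ ≤ β₁s) (hβ₂ : 0 ≤ β₂) (hβ₂s : β₂ ≤ β₂s)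
    (Φ₁ Φ₂ l : ℝ → ℝ)
    (hΦ₁ : StdFun Φ₁) (hΦ₁inc : AlmostIncreasingOn01 Φ₁)
    (hΦ₁low : LowerIndexIs Φ₁ β₁) (hΦ₁up : UpperIndexIs Φ₁ β₁s)
    (hΦ₂ : StdFun Φ₂) (hΦ₂inc : AlmostIncreasingOn01 Φ₂)
    (hΦ₂low : LowerIndexIs Φ₂ β₂) (hΦ₂up : UpperIndexIs Φ₂ β₂s)
    (hl : StdFun l) (hlscale : EllScaling l β₁ β₂) :
    ∃ C : ℝ, 0 < C ∧ ∀ t : ℝ, 0 ≤ t → ∀ x ∈ D, ∀ y ∈ D, x ≠ y →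
      Afun α D Φ₁ Φ₂ l t x y ≤ C := by
  obtain ⟨C₂, hC₂1, hC₂⟩ := stdfun_bdd Φ₂ hΦ₂ hΦ₂inc
  obtain ⟨K, hK0, hK⟩ := prod_bdd β₁ β₂ hβ₁ Φ₁ l hΦ₁ hΦ₁inc hΦ₁low hl hlscale
  refine ⟨K * C₂, by positivity, fun t ht x hx y hy hxy => ?_⟩
  have hδx : 0 < dd D x := dd_pos hd D hDopen hDbdd hx
  have hδy : 0 < dd D y := dd_pos hd D hDopen hDbdd hy
  have hdist : 0 < dist x y := dist_pos.mpr hxy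
  set u : ℝ := t ^ (1 / α) with hu
  have hu0 : 0 ≤ u := Real.rpow_nonneg ht _
  set num : ℝ := max (min (dd D x) (dd D y)) u with hnum
  set M : ℝ := max (max (dd D x) (dd D y)) u with hM
  have hnum0 : 0 < num := lt_max_of_lt_left (lt_min hδx hδy)
  have hnumM : num ≤ M := max_le_max min_le_max le_rfl
  have hden0 : 0 < min M (dist x y) := lt_min (hnum0.trans_le hnumM) hdist
  have ha0 : 0 < num / dist x y := div_pos hnum0 hdist
  have hac : num / dist x y ≤ num / min M (dist x y) :=
    div_le_div_of_nonneg_left hnum0.le hden0 (min_le_right _ _)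
  have hb0 : 0 < M / dist x y := div_pos (hnum0.trans_le hnumM) hdist
  have h1 : Φ₁ (num / dist x y) * l (num / min M (dist x y)) ≤ K :=
    hK _ _ ha0 hac
  have h2 : Φ₂ (M / dist x y) ≤ C₂ := hC₂ _ hb0
  have hP2 : 0 < Φ₂ (M / dist x y) := hΦ₂.2.1 _ hb0
  have hP1 : 0 < Φ₁ (num / dist x y) := hΦ₁.2.1 _ ha0
  have hL : 0 < l (num / min M (dist x y)) := hl.2.1 _ (div_pos hnum0 hden0)
  have : Afun α D Φ₁ Φ₂ l t x y
      = (Φ₁ (num / dist x y) * l (num / min M (dist x y))) * Φ₂ (M / dist x y) := by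
    rw [Afun]; ring
  rw [this]
  exact mul_le_mul h1 h2 hP2.le hK0.le
end
end

section
/- There exists a constant C > 0 such that for all t > 0 and all x, y ∈ D with x ≠ y: (t ∧ |x−y|^α) · ∫ from t^{1/α}∧(ε₁|x−y|/2) to ε₁|x−y| of A_{Φ₁,Φ₂,ℓ}(t,x,x+u𝐧_x)·A_{Φ₁,Φ₂,ℓ}(t,x+u𝐧_x,y)·u^{−α−1} du ≥ C·A_{Φ₁,Φ₂,ℓ}(t,x,y). -/
open Set Metric MeasureTheory Real Filter Topology

noncomputable section

/-!
On the window `u ∈ (a, 2a)`, `a = t^{1/α} ∧ ε₁|x - y|/2`, the point `z = x + u𝐧ₓ` satisfies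
`|x - z| = u ≤ 2t^{1/α}`, so every argument of `A(t,x,z)` is at least `1/2` and this factor is
bounded below. Moreover `|z - y| ≍ |x - y|`, and `δ_D(z)` agrees with `δ_D(x)` up to the factor
`η₂` and the additive error `u`, which `t^{1/α}` absorbs; since `Φ₁`, `Φ₂` and `ℓ` scale like
powers in both directions, `A(t,z,y) ≍ A(t,x,y)`. The window has length `a`, `u^{-α-1} ≥
(2a)^{-α-1}` on it and `a^α ≤ t ∧ |x - y|^α`. The integrand is also bounded on the whole range
of integration, which makes it integrable, so the Bochner integral is not the junk value `0`.
-/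

def Comparable (c v w : ℝ) : Prop :=
  v ≤ c * w ∧ w ≤ c * v

namespace Comparable

variable {c c' v w v' w' : ℝ}

theorem symm (h : Comparable c v w) : Comparable c w v :=
  And.symm h

theorem refl (hc : 1 ≤ c) (hv : 0 ≤ v) : Comparable c v v :=
  ⟨le_mul_of_one_le_left hv hc, le_mul_of_one_le_left hv hc⟩

theorem mono (h : Comparable c v w) (hcc' : c ≤ c') (hv : 0 ≤ v) (hw : 0 ≤ w) :
    Comparable c' v w :=
  ⟨h.1.trans (mul_le_mul_of_nonneg_right hcc' hw), h.2.trans (mul_le_mul_of_nonneg_right hcc' hv)⟩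

theorem pos_right (h : Comparable c v w) (hc : 0 ≤ c) (hv : 0 < v) : 0 < w :=
  pos_of_mul_pos_right (hv.trans_le h.1) hc

theorem min (hc : 0 ≤ c) (h : Comparable c v w) (h' : Comparable c v' w') :
    Comparable c (min v v') (min w w') := by
  rw [Comparable, mul_min_of_nonneg _ _ hc, mul_min_of_nonneg _ _ hc]
  exact ⟨min_le_min h.1 h'.1, min_le_min h.2 h'.2⟩

theorem max (hc : 0 ≤ c) (h : Comparable c v w) (h' : Comparable c v' w') :
    Comparable c (max v v') (max w w') := by
  rw [Comparable, mul_max_of_nonneg _ _ hc, mul_max_of_nonneg _ _ hc]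
  exact ⟨max_le_max h.1 h'.1, max_le_max h.2 h'.2⟩

theorem div (hc : 0 ≤ c) (h : Comparable c v w) (h' : Comparable c' v' w') (hv : 0 ≤ v)
    (hw : 0 ≤ w) (hv' : 0 < v') (hw' : 0 < w') : Comparable (c * c') (v / v') (w / w') := by
  constructor
  · rw [div_le_iff₀ hv', mul_assoc, mul_comm, mul_assoc, div_mul_eq_mul_div, le_div_iff₀ hw']
    nlinarith [mul_le_mul h.1 h'.2 hw'.le (mul_nonneg hc hw)]
  · rw [div_le_iff₀ hw', mul_assoc, mul_comm, mul_assoc, div_mul_eq_mul_div, le_div_iff₀ hv']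
    nlinarith [mul_le_mul h.2 h'.1 hv'.le (mul_nonneg hc hv)]

end Comparable

/-- Unlike `AlmostIncreasingOn01`, the lower comparison also loses a power, so that `ℓ` is
covered. -/
def TwoSidedScaling (f : ℝ → ℝ) (C b : ℝ) : Prop :=
  ∀ v w : ℝ, 0 < v → v ≤ w → f w ≤ C * (w / v) ^ b * f v ∧ f v ≤ C * (w / v) ^ b * f w

theorem min_one_div_min_one_le_div {v w : ℝ} (hv : 0 < v) (hvw : v ≤ w) :
    min w 1 / min v 1 ≤ w / v := by
  rcases le_total w 1 with hw1 | hw1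
  · rw [min_eq_left hw1, min_eq_left (hvw.trans hw1)]
  · rw [min_eq_right hw1, le_div_iff₀ hv]
    rcases le_total v 1 with hv1 | hv1
    · rw [min_eq_left hv1, div_mul_cancel₀ _ hv.ne']; exact hw1
    · rw [min_eq_right hv1, div_one, one_mul]; exact hvw

theorem StdFun.apply_min_one {f : ℝ → ℝ} (hf : StdFun f) (v : ℝ) : f (min v 1) = f v := by
  rcases le_total v 1 with hv1 | hv1
  · rw [min_eq_left hv1]
  · rw [min_eq_right hv1, hf.2.2 v hv1, hf.2.2 1 le_rfl]

namespace TwoSidedScaling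

variable {f : ℝ → ℝ} {C b : ℝ}

theorem one_le_const (h : TwoSidedScaling f C b) (hf : StdFun f) : 1 ≤ C := by
  have := (h 1 1 one_pos le_rfl).1
  rwa [div_self one_ne_zero, one_rpow, mul_one, hf.2.2 1 le_rfl, mul_one] at this

theorem of_le_one (hf : StdFun f) (hC : 0 ≤ C) (hb : 0 ≤ b)
    (h : ∀ v w : ℝ, 0 < v → v ≤ w → w ≤ 1 →
      f w ≤ C * (w / v) ^ b * f v ∧ f v ≤ C * (w / v) ^ b * f w) :
    TwoSidedScaling f C b := by
  intro v w hv hvw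
  have hv' : 0 < min v 1 := lt_min hv one_pos
  have hratio : (min w 1 / min v 1) ^ b ≤ (w / v) ^ b :=
    rpow_le_rpow (div_pos (lt_min (hv.trans_le hvw) one_pos) hv').le
      (min_one_div_min_one_le_div hv hvw) hb
  obtain ⟨h₁, h₂⟩ := h (min v 1) (min w 1) hv' (min_le_min_right 1 hvw) (min_le_right _ _)
  rw [hf.apply_min_one, hf.apply_min_one] at h₁ h₂
  have hfv := hf.2.1 v hv
  have hfw := hf.2.1 w (hv.trans_le hvw)
  constructor
  · exact h₁.trans (by gcongr)
  · exact h₂.trans (by gcongr)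

theorem exists_of_almostIncreasing (hf : StdFun f) (hinc : AlmostIncreasingOn01 f)
    (hup : HasUpperScaling f b) (hb : 0 ≤ b) : ∃ C, TwoSidedScaling f C b := by
  obtain ⟨Cu, hCu, hup⟩ := hup
  obtain ⟨Ci, hCi, hinc⟩ := hinc
  refine ⟨Cu * Ci, of_le_one hf (by nlinarith) hb fun v w hv hvw hw1 => ?_⟩
  have hfv := hf.2.1 v hv
  have hfw := hf.2.1 w (hv.trans_le hvw)
  have hratio : 1 ≤ (w / v) ^ b := one_le_rpow ((one_le_div hv).2 hvw) hb
  have hup := (div_le_iff₀ hfv).1 (hup v w hv hvw hw1)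
  constructor
  · calc f w ≤ Cu * (w / v) ^ b * f v := hup
      _ ≤ Cu * Ci * (w / v) ^ b * f v := by gcongr; exact le_mul_of_one_le_right (by linarith) hCi
  · calc f v ≤ Ci * f w := hinc v w hv hvw hw1
      _ ≤ Cu * Ci * (w / v) ^ b * f w := by
        gcongr
        nlinarith [mul_le_mul hCu hratio zero_le_one (by linarith : (0:ℝ) ≤ Cu)]

theorem exists_of_upperIndexIs {β : ℝ} (hf : StdFun f) (hinc : AlmostIncreasingOn01 f)
    (hup : UpperIndexIs f β) : ∃ C, TwoSidedScaling f C (|β| + 1) :=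
  exists_of_almostIncreasing hf hinc (hup.1 _ ((le_abs_self β).trans_lt (lt_add_one _)))
    (by positivity)

theorem exists_of_ellScaling {β₁ β₂ : ℝ} (hf : StdFun f) (hsc : EllScaling f β₁ β₂) :
    ∃ C, TwoSidedScaling f C 1 := by
  obtain ⟨C, hC, hsc⟩ := hsc 1 one_pos
  refine ⟨C, of_le_one hf (by positivity) zero_le_one fun v w hv hvw hw1 => ?_⟩
  have hfv := hf.2.1 v hv
  have hfw := hf.2.1 w (hv.trans_le hvw)
  have hwv : 1 ≤ w / v := (one_le_div hv).2 hvw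
  obtain ⟨hlow, hup⟩ := hsc v w hv hvw hw1
  rw [rpow_neg (by positivity), le_div_iff₀ hfv] at hlow
  rw [div_le_iff₀ hfv] at hup
  constructor
  · exact hup.trans (by gcongr; exact min_le_left _ _)
  · calc f v = C * (w / v) ^ min 1 β₁ * (C⁻¹ * ((w / v) ^ min 1 β₁)⁻¹ * f v) := by
          field_simp
      _ ≤ C * (w / v) ^ min 1 β₁ * f w := by gcongr
      _ ≤ C * (w / v) ^ (1 : ℝ) * f w := by gcongr; exact min_le_left _ _

theorem mono {C' b' : ℝ} (h : TwoSidedScaling f C b) (hf : StdFun f) (hCC' : C ≤ C')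
    (hbb' : b ≤ b') : TwoSidedScaling f C' b' := by
  intro v w hv hvw
  have hC : 0 ≤ C := zero_le_one.trans (h.one_le_const hf)
  have hfv := hf.2.1 v hv
  have hfw := hf.2.1 w (hv.trans_le hvw)
  have hwv : 1 ≤ w / v := (one_le_div hv).2 hvw
  have hK : C * (w / v) ^ b ≤ C' * (w / v) ^ b' :=
    mul_le_mul hCC' (rpow_le_rpow_of_exponent_le hwv hbb') (by positivity) (hC.trans hCC')
  obtain ⟨h₁, h₂⟩ := h v w hv hvw
  exact ⟨h₁.trans (by gcongr), h₂.trans (by gcongr)⟩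

theorem le_mul_of_comparable (h : TwoSidedScaling f C b) (hf : StdFun f) (hb : 0 ≤ b)
    {c v w : ℝ} (hv : 0 < v) (hw : 0 < w) (hvw : Comparable c v w) :
    f v ≤ C * c ^ b * f w := by
  have hfw := hf.2.1 w hw
  have hC : 0 ≤ C := zero_le_one.trans (h.one_le_const hf)
  rcases le_total v w with hle | hle
  · refine (h v w hv hle).2.trans ?_
    gcongr
    rw [div_le_iff₀ hv]; exact hvw.2
  · refine (h w v hw hle).1.trans ?_
    gcongr
    rw [div_le_iff₀ hw]; exact hvw.1

theorem bounds (h : TwoSidedScaling f C b) (hf : StdFun f) (hb : 0 ≤ b) {c v : ℝ}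
    (hc : 1 ≤ c) (hv : c⁻¹ ≤ v) : f v ≤ C * c ^ b ∧ 1 ≤ C * c ^ b * f v := by
  have hc0 : 0 < c := by linarith
  have hv' : c⁻¹ ≤ min v 1 := le_min hv (inv_le_one_of_one_le₀ hc)
  have hcmp : Comparable c (min v 1) 1 := by
    constructor
    · rw [mul_one]; exact (min_le_right v 1).trans hc
    · rwa [← inv_mul_le_iff₀ hc0, mul_one]
  have hv0 : 0 < min v 1 := (inv_pos.2 hc0).trans_le hv'
  have h1 := hf.2.2 1 le_rfl
  have hle := le_mul_of_comparable h hf hb hv0 one_pos hcmp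
  have hge := le_mul_of_comparable h hf hb one_pos hv0 hcmp.symm
  rw [hf.apply_min_one, h1, mul_one] at hle
  rw [hf.apply_min_one, h1] at hge
  exact ⟨hle, hge⟩

theorem exists_common {g h : ℝ → ℝ} (hf : StdFun f) (hg : StdFun g) (hh : StdFun h)
    {b₁ b₂ b₃ : ℝ} (h₁ : ∃ C, TwoSidedScaling f C b₁)
    (h₂ : ∃ C, TwoSidedScaling g C b₂) (h₃ : ∃ C, TwoSidedScaling h C b₃) :
    ∃ C b, 0 ≤ b ∧ TwoSidedScaling f C b ∧ TwoSidedScaling g C b ∧ TwoSidedScaling h C b := by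
  obtain ⟨C₁, h₁⟩ := h₁
  obtain ⟨C₂, h₂⟩ := h₂
  obtain ⟨C₃, h₃⟩ := h₃
  refine ⟨max (max C₁ C₂) C₃, max (max b₁ b₂) (max b₃ 0), by simp,
    h₁.mono hf (by simp) (by simp), h₂.mono hg (by simp) (by simp),
    h₃.mono hh (by simp) (by simp)⟩

end TwoSidedScaling

theorem comparable_max_of_le_add {η s u δ δ' : ℝ} (hη : 0 < η) (hη1 : η ≤ 1) (hs : 0 < s)
    (hu : u ≤ 2 * s) (hlow : η * δ ≤ δ') (hup : δ' ≤ δ + u) :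
    Comparable (3 / η) (max δ s) (max δ' s) := by
  have h3η : 3 ≤ 3 / η := by rw [le_div_iff₀ hη]; linarith
  have hmax : 0 ≤ max δ s := hs.le.trans (le_max_right _ _)
  have hmax' : 0 ≤ max δ' s := hs.le.trans (le_max_right _ _)
  constructor
  · apply max_le
    · rw [div_mul_eq_mul_div, le_div_iff₀ hη]
      nlinarith [le_max_left δ' s]
    · nlinarith [le_max_right δ' s]
  · apply max_le
    · nlinarith [le_max_left δ s, le_max_right δ s]
    · nlinarith [le_max_right δ s]

theorem dist_comparable_of_dist_le {E : Type*} [PseudoMetricSpace E] {x y z : E}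
    (h : dist x z ≤ dist x y / 2) : Comparable 2 (dist x y) (dist z y) := by
  have h₁ := dist_triangle x z y
  have h₂ := dist_triangle z x y
  rw [dist_comm z x] at h₂
  constructor <;> linarith

def aProfile (f g h : ℝ → ℝ) (m M ρ : ℝ) : ℝ :=
  f (m / ρ) * g (M / ρ) * h (m / min M ρ)

section aProfile

variable {f g h : ℝ → ℝ} {C b m M ρ : ℝ}

theorem aProfile_pos (hf : StdFun f) (hg : StdFun g) (hh : StdFun h) (hm : 0 < m) (hM : 0 < M)
    (hρ : 0 < ρ) : 0 < aProfile f g h m M ρ :=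
  mul_pos (mul_pos (hf.2.1 _ (div_pos hm hρ)) (hg.2.1 _ (div_pos hM hρ)))
    (hh.2.1 _ (div_pos hm (lt_min hM hρ)))

theorem aProfile_bounds (hf : StdFun f) (hg : StdFun g) (hh : StdFun h)
    (hfs : TwoSidedScaling f C b) (hgs : TwoSidedScaling g C b) (hhs : TwoSidedScaling h C b)
    (hb : 0 ≤ b) {c : ℝ} (hc : 1 ≤ c) (hρ : 0 < ρ) (hmM : m ≤ M) (hm : c⁻¹ ≤ m / ρ) :
    aProfile f g h m M ρ ≤ (C * c ^ b) ^ 3 ∧ 1 ≤ (C * c ^ b) ^ 3 * aProfile f g h m M ρ := by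
  have hm0 : 0 < m := (div_pos_iff_of_pos_right hρ).1 ((inv_pos.2 (by linarith)).trans_le hm)
  have hM0 : 0 < M := hm0.trans_le hmM
  have hM : c⁻¹ ≤ M / ρ := hm.trans (div_le_div_of_nonneg_right hmM hρ.le)
  have hmin : c⁻¹ ≤ m / min M ρ :=
    hm.trans (div_le_div_of_nonneg_left hm0.le (lt_min hM0 hρ) (min_le_right _ _))
  obtain ⟨hf₁, hf₂⟩ := hfs.bounds hf hb hc hm
  obtain ⟨hg₁, hg₂⟩ := hgs.bounds hg hb hc hM
  obtain ⟨hh₁, hh₂⟩ := hhs.bounds hh hb hc hmin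
  have hC : 0 < C := zero_lt_one.trans_le (hfs.one_le_const hf)
  have hK : 0 ≤ C * c ^ b := by positivity
  constructor
  · calc aProfile f g h m M ρ ≤ C * c ^ b * (C * c ^ b) * (C * c ^ b) :=
          mul_le_mul (mul_le_mul hf₁ hg₁ (hg.2.1 _ (div_pos hM0 hρ)).le hK) hh₁
            (hh.2.1 _ (div_pos hm0 (lt_min hM0 hρ))).le (mul_nonneg hK hK)
      _ = (C * c ^ b) ^ 3 := by ring
  · calc (1 : ℝ) ≤ C * c ^ b * f (m / ρ) * (C * c ^ b * g (M / ρ)) *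
          (C * c ^ b * h (m / min M ρ)) :=
          one_le_mul_of_one_le_of_one_le (one_le_mul_of_one_le_of_one_le hf₂ hg₂) hh₂
      _ = (C * c ^ b) ^ 3 * aProfile f g h m M ρ := by unfold aProfile; ring

theorem aProfile_le_mul_of_comparable (hf : StdFun f) (hg : StdFun g) (hh : StdFun h)
    (hfs : TwoSidedScaling f C b) (hgs : TwoSidedScaling g C b) (hhs : TwoSidedScaling h C b)
    (hb : 0 ≤ b) {c m' M' ρ' : ℝ} (hc : 0 ≤ c) (hm : 0 < m) (hM : 0 < M) (hρ : 0 < ρ)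
    (hmm' : Comparable c m m') (hMM' : Comparable c M M') (hρρ' : Comparable c ρ ρ') :
    aProfile f g h m M ρ ≤ (C * (c * c) ^ b) ^ 3 * aProfile f g h m' M' ρ' := by
  have hm' := hmm'.pos_right hc hm
  have hM' := hMM'.pos_right hc hM
  have hρ' := hρρ'.pos_right hc hρ
  have hmin := lt_min hM hρ
  have hmin' := lt_min hM' hρ'
  have h₁ := hfs.le_mul_of_comparable hf hb (div_pos hm hρ) (div_pos hm' hρ')
    (hmm'.div hc hρρ' hm.le hm'.le hρ hρ')
  have h₂ := hgs.le_mul_of_comparable hg hb (div_pos hM hρ) (div_pos hM' hρ')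
    (hMM'.div hc hρρ' hM.le hM'.le hρ hρ')
  have h₃ := hhs.le_mul_of_comparable hh hb (div_pos hm hmin) (div_pos hm' hmin')
    (hmm'.div hc (hMM'.min hc hρρ') hm.le hm'.le hmin hmin')
  have hC : 0 < C := zero_lt_one.trans_le (hfs.one_le_const hf)
  have hK : 0 ≤ C * (c * c) ^ b := by positivity
  calc aProfile f g h m M ρ ≤ C * (c * c) ^ b * f (m' / ρ') * (C * (c * c) ^ b * g (M' / ρ')) *
        (C * (c * c) ^ b * h (m' / min M' ρ')) :=
        mul_le_mul (mul_le_mul h₁ h₂ (hg.2.1 _ (div_pos hM hρ)).le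
          (mul_nonneg hK (hf.2.1 _ (div_pos hm' hρ')).le)) h₃
          (hh.2.1 _ (div_pos hm hmin)).le
          (mul_nonneg (mul_nonneg hK (hf.2.1 _ (div_pos hm' hρ')).le)
            (mul_nonneg hK (hg.2.1 _ (div_pos hM' hρ')).le))
    _ = (C * (c * c) ^ b) ^ 3 * aProfile f g h m' M' ρ' := by unfold aProfile; ring

end aProfile

section Afun

variable {d : ℕ} {α : ℝ} {D : Set (EuclideanSpace ℝ (Fin d))} {f g h : ℝ → ℝ} {C b t : ℝ}
  {x y z : EuclideanSpace ℝ (Fin d)}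

theorem Afun_eq_aProfile :
    Afun α D f g h t x y = aProfile f g h (max (min (dd D x) (dd D y)) (t ^ (1 / α)))
      (max (max (dd D x) (dd D y)) (t ^ (1 / α))) (dist x y) :=
  rfl

theorem Afun_pos (hf : StdFun f) (hg : StdFun g) (hh : StdFun h) (hs : 0 < t ^ (1 / α))
    (hxy : 0 < dist x y) : 0 < Afun α D f g h t x y :=
  Afun_eq_aProfile ▸ aProfile_pos hf hg hh (hs.trans_le (le_max_right _ _))
    (hs.trans_le (le_max_right _ _)) hxy

theorem one_le_mul_Afun_of_dist_le (hf : StdFun f) (hg : StdFun g) (hh : StdFun h)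
    (hfs : TwoSidedScaling f C b) (hgs : TwoSidedScaling g C b) (hhs : TwoSidedScaling h C b)
    (hb : 0 ≤ b) (hxz : 0 < dist x z) (hxzs : dist x z ≤ 2 * t ^ (1 / α)) :
    1 ≤ (C * 2 ^ b) ^ 3 * Afun α D f g h t x z := by
  rw [Afun_eq_aProfile]
  refine (aProfile_bounds hf hg hh hfs hgs hhs hb one_le_two hxz
    (max_le_max min_le_max le_rfl) ?_).2
  rw [le_div_iff₀ hxz]
  linarith [le_max_right (min (dd D x) (dd D z)) (t ^ (1 / α))]

theorem Afun_le_of_dist_le (hf : StdFun f) (hg : StdFun g) (hh : StdFun h)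
    (hfs : TwoSidedScaling f C b) (hgs : TwoSidedScaling g C b) (hhs : TwoSidedScaling h C b)
    (hb : 0 ≤ b) (hs : 0 < t ^ (1 / α)) (hxy : 0 < dist x y) {R : ℝ} (hR : dist x y ≤ R) :
    Afun α D f g h t x y ≤ (C * max (R / t ^ (1 / α)) 1 ^ b) ^ 3 := by
  rw [Afun_eq_aProfile]
  refine (aProfile_bounds hf hg hh hfs hgs hhs hb (le_max_right _ _) hxy
    (max_le_max min_le_max le_rfl) ?_).1
  calc (max (R / t ^ (1 / α)) 1)⁻¹ ≤ (R / t ^ (1 / α))⁻¹ :=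
        inv_anti₀ (div_pos (hxy.trans_le hR) hs) (le_max_left _ _)
    _ = t ^ (1 / α) / R := inv_div _ _
    _ ≤ max (min (dd D x) (dd D y)) (t ^ (1 / α)) / dist x y :=
        div_le_div₀ (hs.le.trans (le_max_right _ _)) (le_max_right _ _) hxy hR

theorem Afun_le_mul_Afun_of_comparable (hf : StdFun f) (hg : StdFun g) (hh : StdFun h)
    (hfs : TwoSidedScaling f C b) (hgs : TwoSidedScaling g C b) (hhs : TwoSidedScaling h C b)
    (hb : 0 ≤ b) {η u : ℝ} (hη : 0 < η) (hη1 : η ≤ 1) (hs : 0 < t ^ (1 / α))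
    (hu : u ≤ 2 * t ^ (1 / α)) (hlow : η * dd D x ≤ dd D z) (hup : dd D z ≤ dd D x + u)
    (hxy : 0 < dist x y) (hzy : Comparable 2 (dist x y) (dist z y)) :
    Afun α D f g h t x y ≤ (C * (3 / η * (3 / η)) ^ b) ^ 3 * Afun α D f g h t z y := by
  have h3η : 3 ≤ 3 / η := by rw [le_div_iff₀ hη]; linarith
  have hxz := comparable_max_of_le_add hη hη1 hs hu hlow hup
  have hy : Comparable (3 / η) (max (dd D y) (t ^ (1 / α))) (max (dd D y) (t ^ (1 / α))) :=
    .refl (by linarith) (hs.le.trans (le_max_right _ _))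
  have hm : Comparable (3 / η) (max (min (dd D x) (dd D y)) (t ^ (1 / α)))
      (max (min (dd D z) (dd D y)) (t ^ (1 / α))) := by
    rw [max_min_distrib_right, max_min_distrib_right]
    exact hxz.min (by linarith) hy
  have hM : Comparable (3 / η) (max (max (dd D x) (dd D y)) (t ^ (1 / α)))
      (max (max (dd D z) (dd D y)) (t ^ (1 / α))) := by
    rw [sup_sup_distrib_right (dd D x), sup_sup_distrib_right (dd D z)]
    exact hxz.max (by linarith) hy
  rw [Afun_eq_aProfile, Afun_eq_aProfile]
  exact aProfile_le_mul_of_comparable hf hg hh hfs hgs hhs hb (by linarith)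
    (hs.trans_le (le_max_right _ _)) (hs.trans_le (le_max_right _ _)) hxy hm hM
    (hzy.mono (by linarith) dist_nonneg dist_nonneg)

theorem measurable_Afun_comp (hf : Measurable f) (hg : Measurable g) (hh : Measurable h)
    {p q : ℝ → EuclideanSpace ℝ (Fin d)} (hp : Continuous p) (hq : Continuous q) :
    Measurable fun u => Afun α D f g h t (p u) (q u) := by
  have hdd : Continuous (dd D) := continuous_infDist_pt _
  have hdp : Measurable fun u => dd D (p u) := (hdd.comp hp).measurable
  have hdq : Measurable fun u => dd D (q u) := (hdd.comp hq).measurable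
  have hpq : Measurable fun u => dist (p u) (q u) := (hp.dist hq).measurable
  simp only [Afun]
  fun_prop

end Afun

theorem infDist_frontier_pos {E : Type*} [NormedAddCommGroup E] [NormedSpace ℝ E] [Nontrivial E]
    {D : Set E} (hD : IsOpen D) (hDb : Bornology.IsBounded D) {x : E} (hx : x ∈ D) :
    0 < infDist x (frontier D) := by
  have hne : (frontier D).Nonempty := by
    rw [nonempty_frontier_iff]
    exact ⟨⟨x, hx⟩, fun h => NormedSpace.unbounded_univ ℝ E (h ▸ hDb)⟩
  refine (isClosed_frontier.notMem_iff_infDist_pos hne).1 fun hxf => ?_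
  rw [hD.frontier_eq] at hxf
  exact hxf.2 hx

theorem dist_add_smul_nv {d : ℕ} {D : Set (EuclideanSpace ℝ (Fin d))}
    {Q : EuclideanSpace ℝ (Fin d) → EuclideanSpace ℝ (Fin d)} {x : EuclideanSpace ℝ (Fin d)}
    (hQ : dist x (Q x) = dd D x) (hδ : 0 < dd D x) {u : ℝ} (hu : 0 ≤ u) :
    dist x (x + u • nv D Q x) = u := by
  rw [dist_self_add_right, norm_smul, nv, norm_smul, norm_inv, Real.norm_of_nonneg hu,
    Real.norm_of_nonneg hδ.le, ← dist_eq_norm, hQ, inv_mul_cancel₀ hδ.ne', mul_one]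

theorem mul_le_setIntegral_Ioo {F : ℝ → ℝ} {a c b K M : ℝ} (hac : a ≤ c) (hcb : c ≤ b)
    (hF : Measurable F) (hF0 : ∀ u ∈ Ioo a b, 0 ≤ F u) (hFM : ∀ u ∈ Ioo a b, F u ≤ M)
    (hKF : ∀ u ∈ Ioo a c, K ≤ F u) : (c - a) * K ≤ ∫ u in Ioo a b, F u := by
  have hint : IntegrableOn F (Ioo a b) := by
    refine Measure.integrableOn_of_bounded (M := M) measure_Ioo_lt_top.ne
      hF.aestronglyMeasurable ?_
    rw [ae_restrict_iff' measurableSet_Ioo]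
    filter_upwards with u hu
    rw [Real.norm_eq_abs, abs_of_nonneg (hF0 u hu)]
    exact hFM u hu
  calc (c - a) * K = ∫ _ in Ioo a c, K := by
        rw [setIntegral_const, Real.volume_real_Ioo_of_le hac, smul_eq_mul]
    _ ≤ ∫ u in Ioo a c, F u :=
        setIntegral_mono_on (integrableOn_const measure_Ioo_lt_top.ne)
          (hint.mono_set (Ioo_subset_Ioo_right hcb)) measurableSet_Ioo hKF
    _ ≤ ∫ u in Ioo a b, F u := by
        refine setIntegral_mono_set hint ?_ (Ioo_subset_Ioo_right hcb).eventuallyLE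
        rw [EventuallyLE, ae_restrict_iff' measurableSet_Ioo]
        exact Eventually.of_forall hF0

theorem two_rpow_le_min_mul {α t r a : ℝ} (hα : 0 < α) (ht : 0 < t) (ha : 0 < a)
    (hat : a ≤ t ^ (1 / α)) (har : a ≤ r) :
    2 ^ (-α - 1) ≤ min t (r ^ α) * (a * (2 * a) ^ (-α - 1)) := by
  have haα : a ^ α ≤ min t (r ^ α) := by
    refine le_min ?_ (rpow_le_rpow ha.le har hα.le)
    calc a ^ α ≤ (t ^ (1 / α)) ^ α := rpow_le_rpow ha.le hat hα.le
      _ = t := by rw [← rpow_mul ht.le, one_div_mul_cancel hα.ne', rpow_one]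
  have hsplit : a * (2 * a) ^ (-α - 1) = 2 ^ (-α - 1) * (a ^ α)⁻¹ := by
    rw [mul_rpow zero_le_two ha.le, rpow_sub ha, rpow_one, rpow_neg ha.le]
    field_simp
  rw [hsplit, ← mul_assoc, mul_comm _ (2 ^ (-α - 1)), mul_assoc]
  refine le_mul_of_one_le_right (by positivity) ?_
  rw [← div_eq_mul_inv, one_le_div (by positivity)]
  exact haα

section TwoJump

variable {d : ℕ} {α : ℝ} {D : Set (EuclideanSpace ℝ (Fin d))}
  {Q : EuclideanSpace ℝ (Fin d) → EuclideanSpace ℝ (Fin d)} {f g h : ℝ → ℝ} {C b t η : ℝ}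
  {x y z : EuclideanSpace ℝ (Fin d)}

def twoJumpIntegrand (α : ℝ) (D : Set (EuclideanSpace ℝ (Fin d)))
    (Q : EuclideanSpace ℝ (Fin d) → EuclideanSpace ℝ (Fin d)) (f g h : ℝ → ℝ) (t : ℝ)
    (x y : EuclideanSpace ℝ (Fin d)) (u : ℝ) : ℝ :=
  Afun α D f g h t x (x + u • nv D Q x) * Afun α D f g h t (x + u • nv D Q x) y * u ^ (-α - 1)

theorem Iint_eq_setIntegral {a b : ℝ} :
    Iint α D Q f g h a b t x y = ∫ u in Ioo a b, twoJumpIntegrand α D Q f g h t x y u :=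
  rfl

theorem measurable_twoJumpIntegrand (hf : Measurable f) (hg : Measurable g)
    (hh : Measurable h) : Measurable (twoJumpIntegrand α D Q f g h t x y) :=
  ((measurable_Afun_comp hf hg hh continuous_const (by fun_prop)).mul
    (measurable_Afun_comp hf hg hh (by fun_prop) continuous_const)).mul (by fun_prop)

theorem twoJumpIntegrand_bounds (hf : StdFun f) (hg : StdFun g) (hh : StdFun h)
    (hfs : TwoSidedScaling f C b) (hgs : TwoSidedScaling g C b) (hhs : TwoSidedScaling h C b)
    (hb : 0 ≤ b) (hα : 0 < α) (hs : 0 < t ^ (1 / α)) (hxy : 0 < dist x y) {a u : ℝ}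
    (ha : 0 < a) (hau : a ≤ u) (hu : u ≤ 2 * dist x y) (hxz : dist x (x + u • nv D Q x) = u)
    (hzy : Comparable 2 (dist x y) (dist (x + u • nv D Q x) y)) :
    0 ≤ twoJumpIntegrand α D Q f g h t x y u ∧ twoJumpIntegrand α D Q f g h t x y u ≤
      (C * max (2 * dist x y / t ^ (1 / α)) 1 ^ b) ^ 3 *
        (C * max (2 * dist x y / t ^ (1 / α)) 1 ^ b) ^ 3 * a ^ (-α - 1) := by
  have hu0 : 0 < dist x (x + u • nv D Q x) := by rw [hxz]; exact ha.trans_le hau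
  have hzy0 := hzy.pos_right zero_le_two hxy
  have hxz₀ := Afun_pos (α := α) (D := D) (t := t) hf hg hh hs hu0
  have hzy₀ := Afun_pos (α := α) (D := D) (t := t) hf hg hh hs hzy0
  have hB : 0 ≤ (C * max (2 * dist x y / t ^ (1 / α)) 1 ^ b) ^ 3 :=
    pow_nonneg (mul_nonneg (zero_le_one.trans (hfs.one_le_const hf))
      (rpow_nonneg (zero_le_one.trans (le_max_right _ _)) b)) 3
  have hu : 0 < u := ha.trans_le hau
  refine ⟨by unfold twoJumpIntegrand; positivity,
    mul_le_mul (mul_le_mul ?_ ?_ hzy₀.le hB) ?_ (by positivity) (mul_nonneg hB hB)⟩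
  · exact Afun_le_of_dist_le hf hg hh hfs hgs hhs hb hs hu0 (by rwa [hxz])
  · exact Afun_le_of_dist_le hf hg hh hfs hgs hhs hb hs hzy0 hzy.2
  · exact rpow_le_rpow_of_nonpos ha hau (by linarith)

theorem mul_Afun_le_Afun_mul_Afun (hf : StdFun f) (hg : StdFun g) (hh : StdFun h)
    (hfs : TwoSidedScaling f C b) (hgs : TwoSidedScaling g C b) (hhs : TwoSidedScaling h C b)
    (hb : 0 ≤ b) (hη : 0 < η) (hη1 : η ≤ 1) (hs : 0 < t ^ (1 / α)) {u : ℝ} (hu0 : 0 < u)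
    (hu : u ≤ 2 * t ^ (1 / α)) (hxz : dist x z = u) (hlow : η * (dd D x + u) ≤ dd D z)
    (hup : dd D z ≤ dd D x + u) (hxy : 0 < dist x y) (hzy : Comparable 2 (dist x y) (dist z y)) :
    ((C * 2 ^ b) ^ 3 * (C * (3 / η * (3 / η)) ^ b) ^ 3)⁻¹ * Afun α D f g h t x y ≤
      Afun α D f g h t x z * Afun α D f g h t z y := by
  have hC : 0 < C := zero_lt_one.trans_le (hfs.one_le_const hf)
  have hxz₁ := one_le_mul_Afun_of_dist_le (α := α) (D := D) (t := t) hf hg hh hfs hgs hhs hb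
    (hxz ▸ hu0) (hxz ▸ hu)
  have hlow' : η * dd D x ≤ dd D z := le_trans (by nlinarith) hlow
  have hxy₂ := Afun_le_mul_Afun_of_comparable hf hg hh hfs hgs hhs hb hη hη1 hs hu hlow' hup
    hxy hzy
  have hzy₀ := Afun_pos (α := α) (D := D) (t := t) hf hg hh hs (hzy.pos_right zero_le_two hxy)
  rw [inv_mul_le_iff₀ (by positivity)]
  calc Afun α D f g h t x y ≤ (C * (3 / η * (3 / η)) ^ b) ^ 3 * Afun α D f g h t z y := hxy₂
    _ ≤ (C * (3 / η * (3 / η)) ^ b) ^ 3 *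
        ((C * 2 ^ b) ^ 3 * Afun α D f g h t x z * Afun α D f g h t z y) := by
      gcongr
      exact le_mul_of_one_le_left hzy₀.le hxz₁
    _ = _ := by ring

theorem mul_le_twoJumpIntegrand (hf : StdFun f) (hg : StdFun g) (hh : StdFun h)
    (hfs : TwoSidedScaling f C b) (hgs : TwoSidedScaling g C b) (hhs : TwoSidedScaling h C b)
    (hb : 0 ≤ b) (hη : 0 < η) (hη1 : η ≤ 1) (hs : 0 < t ^ (1 / α)) (hα : 0 < α) {a u : ℝ}
    (hu0 : 0 < u) (hua : u ≤ 2 * a) (hu : u ≤ 2 * t ^ (1 / α))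
    (hxz : dist x (x + u • nv D Q x) = u) (hlow : η * (dd D x + u) ≤ dd D (x + u • nv D Q x))
    (hup : dd D (x + u • nv D Q x) ≤ dd D x + u) (hxy : 0 < dist x y)
    (hzy : Comparable 2 (dist x y) (dist (x + u • nv D Q x) y)) :
    ((C * 2 ^ b) ^ 3 * (C * (3 / η * (3 / η)) ^ b) ^ 3)⁻¹ * Afun α D f g h t x y *
      (2 * a) ^ (-α - 1) ≤ twoJumpIntegrand α D Q f g h t x y u :=
  mul_le_mul
    (mul_Afun_le_Afun_mul_Afun hf hg hh hfs hgs hhs hb hη hη1 hs hu0 hu hxz hlow hup hxy hzy)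
    (rpow_le_rpow_of_nonpos hu0 hua (by linarith)) (rpow_nonneg (by linarith) _)
    (mul_pos (Afun_pos hf hg hh hs (by rwa [hxz]))
      (Afun_pos hf hg hh hs (hzy.pos_right zero_le_two hxy))).le

theorem mul_Afun_le_min_mul_Iint (hf : StdFun f) (hg : StdFun g) (hh : StdFun h)
    (hfs : TwoSidedScaling f C b) (hgs : TwoSidedScaling g C b) (hhs : TwoSidedScaling h C b)
    (hb : 0 ≤ b) (hη : 0 < η) (hη1 : η ≤ 1) (hα : 0 < α) (ht : 0 < t) (hxy : x ≠ y)
    {ε : ℝ} (hε : 0 < ε) (hε2 : ε ≤ 1 / 2) (hδx : 0 < dd D x) (hQx : dist x (Q x) = dd D x)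
    (hlift : ∀ u, 0 < u → u ≤ ε * dist x y → η * (dd D x + u) ≤ dd D (x + u • nv D Q x) ∧
      dd D (x + u • nv D Q x) ≤ dd D x + u) :
    2 ^ (-α - 1) * ((C * 2 ^ b) ^ 3 * (C * (3 / η * (3 / η)) ^ b) ^ 3)⁻¹ *
        Afun α D f g h t x y ≤
      min t (dist x y ^ α) *
        Iint α D Q f g h (min (t ^ (1 / α)) (ε * dist x y / 2)) (ε * dist x y) t x y := by
  set s := t ^ (1 / α)
  set r := dist x y
  set a := min s (ε * r / 2)
  have hs : 0 < s := rpow_pos_of_pos ht _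
  have hr : 0 < r := dist_pos.2 hxy
  have hC : 0 < C := zero_lt_one.trans_le (hfs.one_le_const hf)
  have ha : 0 < a := lt_min hs (by positivity)
  have h2a : 2 * a ≤ ε * r := by linarith [min_le_right s (ε * r / 2)]
  have hstep : ∀ u ∈ Ioo a (ε * r), 0 < u ∧ dist x (x + u • nv D Q x) = u ∧
      Comparable 2 r (dist (x + u • nv D Q x) y) := by
    intro u hu
    have hu0 := ha.trans hu.1
    have hxz := dist_add_smul_nv hQx hδx hu0.le
    exact ⟨hu0, hxz, dist_comparable_of_dist_le (by rw [hxz]; nlinarith [hu.2])⟩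
  have hlower (u : ℝ) (hu : u ∈ Ioo a (2 * a)) := by
    obtain ⟨hu0, hxz, hzy⟩ := hstep u ⟨hu.1, hu.2.trans_le h2a⟩
    obtain ⟨hlow, hup⟩ := hlift u hu0 (hu.2.le.trans h2a)
    exact mul_le_twoJumpIntegrand hf hg hh hfs hgs hhs hb hη hη1 hs hα hu0 hu.2.le
      (by linarith [min_le_left s (ε * r / 2), hu.2]) hxz hlow hup hr hzy
  have hupper (u : ℝ) (hu : u ∈ Ioo a (ε * r)) := by
    obtain ⟨hu0, hxz, hzy⟩ := hstep u hu
    exact twoJumpIntegrand_bounds (Q := Q) hf hg hh hfs hgs hhs hb hα hs hr ha hu.1.le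
      (by nlinarith [hu.2]) hxz hzy
  have hint := mul_le_setIntegral_Ioo (by linarith) h2a
    (measurable_twoJumpIntegrand hf.1 hg.1 hh.1) (fun u hu => (hupper u hu).1)
    (fun u hu => (hupper u hu).2) hlower
  have hmin := two_rpow_le_min_mul (r := r) hα ht ha (min_le_left _ _)
    ((min_le_right _ _).trans (by nlinarith))
  have hA := Afun_pos (α := α) (D := D) (t := t) hf hg hh hs hr
  rw [Iint_eq_setIntegral]
  calc _ ≤ min t (r ^ α) * (a * (2 * a) ^ (-α - 1)) *
        (((C * 2 ^ b) ^ 3 * (C * (3 / η * (3 / η)) ^ b) ^ 3)⁻¹ * Afun α D f g h t x y) := by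
        rw [mul_assoc]; gcongr
    _ = min t (r ^ α) * ((2 * a - a) * (((C * 2 ^ b) ^ 3 * (C * (3 / η * (3 / η)) ^ b) ^ 3)⁻¹ *
        Afun α D f g h t x y * (2 * a) ^ (-α - 1))) := by ring
    _ ≤ _ := by gcongr

end TwoJump

theorem statement_4_general
    (d : ℕ) (hd : 2 ≤ d)
    (D : Set (EuclideanSpace ℝ (Fin d))) (hDopen : IsOpen D)
    (hDbdd : Bornology.IsBounded D)
    (Q : EuclideanSpace ℝ (Fin d) → EuclideanSpace ℝ (Fin d))
    (hQ : ∀ x ∈ D, Q x ∈ frontier D ∧ dist x (Q x) = dd D x)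
    (η₁ η₂ : ℝ) (hη₁0 : 0 < η₁) (hη₂0 : 0 < η₂) (hη₂1 : η₂ < 1)
    (hlift : ∀ x ∈ D, ∀ r : ℝ, 0 < r → r ≤ η₁ →
      η₂ * (dd D x + r) ≤ dd D (x + r • nv D Q x) ∧ dd D (x + r • nv D Q x) ≤ dd D x + r)
    (ε₁ : ℝ) (hε₁ : ε₁ = min (1 / 4 : ℝ) (η₁ / Metric.diam D))
    (α β₁ β₁s β₂ β₂s : ℝ) (hα0 : 0 < α)
    (Φ₁ Φ₂ l : ℝ → ℝ)
    (hΦ₁ : StdFun Φ₁) (hΦ₁inc : AlmostIncreasingOn01 Φ₁)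
    (hΦ₁up : UpperIndexIs Φ₁ β₁s)
    (hΦ₂ : StdFun Φ₂) (hΦ₂inc : AlmostIncreasingOn01 Φ₂)
    (hΦ₂up : UpperIndexIs Φ₂ β₂s)
    (hl : StdFun l) (hlscale : EllScaling l β₁ β₂)
    :
    ∃ C : ℝ, 0 < C ∧ ∀ t : ℝ, 0 < t → ∀ x ∈ D, ∀ y ∈ D, x ≠ y →
      C * Afun α D Φ₁ Φ₂ l t x y ≤
        min t (dist x y ^ α) *
          Iint α D Q Φ₁ Φ₂ l
            (min (t ^ (1 / α)) (ε₁ * dist x y / 2))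
            (ε₁ * dist x y) t x y := by
  obtain ⟨C, b, hb, hΦ₁s, hΦ₂s, hls⟩ := TwoSidedScaling.exists_common hΦ₁ hΦ₂ hl
    (TwoSidedScaling.exists_of_upperIndexIs hΦ₁ hΦ₁inc hΦ₁up)
    (TwoSidedScaling.exists_of_upperIndexIs hΦ₂ hΦ₂inc hΦ₂up)
    (TwoSidedScaling.exists_of_ellScaling hl hlscale)
  have hC : 0 < C := zero_lt_one.trans_le (hΦ₁s.one_le_const hΦ₁)
  refine ⟨2 ^ (-α - 1) * ((C * 2 ^ b) ^ 3 * (C * (3 / η₂ * (3 / η₂)) ^ b) ^ 3)⁻¹, by positivity,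
    fun t ht x hx y hy hxy => ?_⟩
  have : Nonempty (Fin d) := ⟨⟨0, by omega⟩⟩
  have hr : 0 < dist x y := dist_pos.2 hxy
  have hdiam : dist x y ≤ diam D := dist_le_diam_of_mem hDbdd hx hy
  have hε₁0 : 0 < ε₁ := by
    rw [hε₁]; exact lt_min (by norm_num) (div_pos hη₁0 (hr.trans_le hdiam))
  have hε₁η₁ : ε₁ * dist x y ≤ η₁ := by
    calc ε₁ * dist x y ≤ η₁ / diam D * diam D :=
          mul_le_mul (hε₁ ▸ min_le_right _ _) hdiam hr.le (by positivity)
      _ = η₁ := div_mul_cancel₀ _ (hr.trans_le hdiam).ne'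
  exact mul_Afun_le_min_mul_Iint hΦ₁ hΦ₂ hl hΦ₁s hΦ₂s hls hb hη₂0 hη₂1.le hα0 ht hxy hε₁0
    (hε₁ ▸ (min_le_left _ _).trans (by norm_num)) (infDist_frontier_pos hDopen hDbdd hx)
    (hQ x hx).2 fun u hu hur => hlift x hx u hu (hur.trans hε₁η₁)

/-- Lemma 3.2(ii): the two-jump integral dominates `A_{Φ₁,Φ₂,ℓ}`. -/
theorem statement_4
    (d : ℕ) (hd : 2 ≤ d)
    (D : Set (EuclideanSpace ℝ (Fin d))) (hDopen : IsOpen D)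
    (hDbdd : Bornology.IsBounded D)
    (Q : EuclideanSpace ℝ (Fin d) → EuclideanSpace ℝ (Fin d))
    (hQ : ∀ x ∈ D, Q x ∈ frontier D ∧ dist x (Q x) = dd D x)
    (η₁ η₂ : ℝ) (hη₁0 : 0 < η₁) (hη₁1 : η₁ ≤ 1) (hη₂0 : 0 < η₂) (hη₂1 : η₂ < 1)
    (hlift : ∀ x ∈ D, ∀ r : ℝ, 0 < r → r ≤ η₁ →
      η₂ * (dd D x + r) ≤ dd D (x + r • nv D Q x) ∧ dd D (x + r • nv D Q x) ≤ dd D x + r)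
    (ε₁ : ℝ) (hε₁ : ε₁ = min (1 / 4 : ℝ) (η₁ / Metric.diam D))
    (α β₁ β₁s β₂ β₂s : ℝ) (hα0 : 0 < α) (hα2 : α < 2)
    (hβ₁ : 0 ≤ β₁) (hβ₁s : β₁ ≤ β₁s) (hβ₂ : 0 ≤ β₂) (hβ₂s : β₂ ≤ β₂s)
    (Φ₁ Φ₂ l : ℝ → ℝ)
    (hΦ₁ : StdFun Φ₁) (hΦ₁inc : AlmostIncreasingOn01 Φ₁)
    (hΦ₁low : LowerIndexIs Φ₁ β₁) (hΦ₁up : UpperIndexIs Φ₁ β₁s)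
    (hΦ₂ : StdFun Φ₂) (hΦ₂inc : AlmostIncreasingOn01 Φ₂)
    (hΦ₂low : LowerIndexIs Φ₂ β₂) (hΦ₂up : UpperIndexIs Φ₂ β₂s)
    (hl : StdFun l) (hlscale : EllScaling l β₁ β₂)
    (Φ₀ : ℝ → ℝ) (hΦ₀def : ∀ r : ℝ, Φ₀ r = Φ₁ r * l r)
    :
    ∃ C : ℝ, 0 < C ∧ ∀ t : ℝ, 0 < t → ∀ x ∈ D, ∀ y ∈ D, x ≠ y →
      C * Afun α D Φ₁ Φ₂ l t x y ≤
        min t (dist x y ^ α) *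
          Iint α D Q Φ₁ Φ₂ l
            (min (t ^ (1 / α)) (ε₁ * dist x y / 2))
            (ε₁ * dist x y) t x y :=
  statement_4_general d hd D hDopen hDbdd Q hQ η₁ η₂ hη₁0 hη₂0 hη₂1 hlift ε₁ hε₁ α β₁ β₁s β₂ β₂s hα0
    Φ₁ Φ₂ l hΦ₁ hΦ₁inc hΦ₁up hΦ₂ hΦ₂inc hΦ₂up hl hlscale
end
end

section
/- Suppose β₂ > α + β₁*. Then: (a) for every pair of distinct points x, y ∈ D, lim_{t→0⁺} [t|x−y|^{−α} A_{Φ₀,Φ₀,1}(t,x,y)] / A_{Φ₁,Φ₂,ℓ}(t,x,y) = 0; (b) for every pair of distinct points Q, Q′ ∈ ∂D, lim_{t→0⁺} L(t) = +∞, where L(t) denotes the limit inferior of [t|x−y|^{−α} A_{Φ₀,Φ₀,1}(t,x,y)] / A_{Φ₁,Φ₂,ℓ}(t,x,y) as x → Q and y → Q′ with x, y ∈ D. -/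
open Set Metric MeasureTheory Real Filter Topology

noncomputable section

/-!
For fixed interior points, once `t ^ (1 / α) ≤ δ_D(x) ∧ δ_D(y)` neither `A` depends on `t`, so the
quotient is a constant multiple of `t`.

Near two distinct boundary points, with `s = t ^ (1 / α)` and `u = s / |x - y|`, every argument of
both `A`'s is `u` or `1`, so the quotient is `t |x - y| ^ (-α) Φ₁(u) ℓ(u)² / Φ₂(u)`. The scaling
conditions give `Φ₁(u) ℓ(u)² / Φ₂(u) ≳ u ^ (-(α + κ))` with `κ = (β₂ - α - β₁*) / 4 > 0`, so the
quotient is `≳ |x - y| ^ κ t ^ (-κ / α)`, which blows up as `t → 0⁺`. For fixed `t` the quotient is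
also bounded above near `(Q, Q')`; without that, the real `liminf` would take its junk value.
-/

namespace StdFun

variable {f : ℝ → ℝ}

theorem le_mul_rpow_of_hasLowerScaling (hf : StdFun f) {b : ℝ} (h : HasLowerScaling f b) :
    ∃ C > 0, ∀ u : ℝ, 0 < u → u ≤ 1 → f u ≤ C * u ^ b := by
  obtain ⟨C, hC1, hC⟩ := h
  refine ⟨C, by linarith, fun u hu hu1 => ?_⟩
  have hfu := hf.2.1 u hu
  have key := hC u 1 hu hu1 le_rfl
  rw [hf.2.2 1 le_rfl, Real.div_rpow zero_le_one hu.le, Real.one_rpow,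
    le_div_iff₀ hfu] at key
  calc f u = C * u ^ b * (C⁻¹ * (1 / u ^ b) * f u) := by
        field_simp
    _ ≤ C * u ^ b * 1 := by gcongr
    _ = C * u ^ b := mul_one _

theorem mul_rpow_le_of_hasUpperScaling (hf : StdFun f) {b : ℝ} (h : HasUpperScaling f b) :
    ∃ c > 0, ∀ u : ℝ, 0 < u → u ≤ 1 → c * u ^ b ≤ f u := by
  obtain ⟨C, hC1, hC⟩ := h
  refine ⟨C⁻¹, by positivity, fun u hu hu1 => ?_⟩
  have hfu := hf.2.1 u hu
  have key := hC u 1 hu hu1 le_rfl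
  rw [hf.2.2 1 le_rfl, Real.div_rpow zero_le_one hu.le, Real.one_rpow,
    div_le_iff₀ hfu] at key
  have hub : 0 < u ^ b := Real.rpow_pos_of_pos hu b
  calc C⁻¹ * u ^ b = C⁻¹ * u ^ b * 1 := (mul_one _).symm
    _ ≤ C⁻¹ * u ^ b * (C * (1 / u ^ b) * f u) := by gcongr
    _ = f u := by field_simp

theorem le_of_almostIncreasingOn01 (hf : StdFun f) (h : AlmostIncreasingOn01 f) :
    ∃ C, ∀ u : ℝ, 0 < u → u ≤ 1 → f u ≤ C := by
  obtain ⟨C, -, hC⟩ := h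
  exact ⟨C, fun u hu hu1 => by simpa [hf.2.2 1 le_rfl] using hC u 1 hu hu1 le_rfl⟩

end StdFun

namespace EllScaling

variable {l : ℝ → ℝ} {β₁ β₂ : ℝ}

theorem hasLowerScaling (h : EllScaling l β₁ β₂) {ε : ℝ} (hε : 0 < ε) :
    HasLowerScaling l (-ε) := by
  obtain ⟨C, hC1, hC⟩ := h ε hε
  refine ⟨C, hC1, fun s r hs hsr hr => le_trans ?_ (hC s r hs hsr hr).1⟩
  gcongr
  · rwa [one_le_div hs]
  · exact min_le_left ε β₁

theorem hasUpperScaling (h : EllScaling l β₁ β₂) {ε : ℝ} (hε : 0 < ε) :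
    HasUpperScaling l ε := by
  obtain ⟨C, hC1, hC⟩ := h ε hε
  refine ⟨C, hC1, fun s r hs hsr hr => (hC s r hs hsr hr).2.trans ?_⟩
  gcongr
  · rwa [one_le_div hs]
  · exact min_le_left ε β₂

end EllScaling

section Profile

variable {Φ₁ Φ₂ l : ℝ → ℝ}

theorem exists_mul_rpow_le_profile (hΦ₁ : StdFun Φ₁) (hΦ₂ : StdFun Φ₂) (hl : StdFun l)
    {b₁ b₂ η : ℝ} (h₁ : HasUpperScaling Φ₁ b₁) (h₂ : HasLowerScaling Φ₂ b₂)
    (hη : HasUpperScaling l η) :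
    ∃ c > 0, ∀ u : ℝ, 0 < u → u ≤ 1 → c * u ^ (b₁ + 2 * η - b₂) ≤ Φ₁ u * l u ^ 2 / Φ₂ u := by
  obtain ⟨c₁, hc₁, hΦ₁u⟩ := hΦ₁.mul_rpow_le_of_hasUpperScaling h₁
  obtain ⟨C₂, hC₂, hΦ₂u⟩ := hΦ₂.le_mul_rpow_of_hasLowerScaling h₂
  obtain ⟨c, hc, hlu⟩ := hl.mul_rpow_le_of_hasUpperScaling hη
  refine ⟨c₁ * c ^ 2 / C₂, by positivity, fun u hu hu1 => ?_⟩
  calc c₁ * c ^ 2 / C₂ * u ^ (b₁ + 2 * η - b₂)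
      = c₁ * u ^ b₁ * (c * u ^ η) ^ 2 / (C₂ * u ^ b₂) := by
        rw [Real.rpow_sub hu, Real.rpow_add hu, mul_comm 2 η, Real.rpow_mul hu.le,
          Real.rpow_two]
        field_simp
    _ ≤ Φ₁ u * l u ^ 2 / Φ₂ u :=
        div_le_div₀ (by have := hΦ₁.2.1 u hu; positivity)
          (mul_le_mul (hΦ₁u u hu hu1) (pow_le_pow_left₀ (by positivity) (hlu u hu hu1) 2)
            (by positivity) (hΦ₁.2.1 u hu).le)
          (hΦ₂.2.1 u hu) (hΦ₂u u hu hu1)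

theorem exists_profile_le (hΦ₁ : StdFun Φ₁) (hΦ₁inc : AlmostIncreasingOn01 Φ₁)
    (hΦ₂ : StdFun Φ₂) (hΦ₂inc : AlmostIncreasingOn01 Φ₂) (hl : StdFun l) {ε : ℝ} (hε : 0 ≤ ε)
    (hlε : HasLowerScaling l (-ε)) {a : ℝ} (ha : 0 < a) :
    ∃ M, ∀ u : ℝ, a ≤ u → u ≤ 1 → Φ₁ u * l u ^ 2 / Φ₂ u ≤ M := by
  obtain ⟨C₁, hΦ₁u⟩ := hΦ₁.le_of_almostIncreasingOn01 hΦ₁inc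
  obtain ⟨C₂, hC₂, hΦ₂u⟩ := hΦ₂inc
  obtain ⟨C, hC, hlu⟩ := hl.le_mul_rpow_of_hasLowerScaling hlε
  refine ⟨C₁ * (C * a ^ (-ε)) ^ 2 / (Φ₂ a / C₂), fun u hau hu1 => ?_⟩
  have hu : 0 < u := ha.trans_le hau
  have hΦ₁C₁ := hΦ₁u u hu hu1
  have hla : l u ≤ C * a ^ (-ε) :=
    (hlu u hu hu1).trans
      (mul_le_mul_of_nonneg_left (Real.rpow_le_rpow_of_nonpos ha hau (neg_nonpos.2 hε)) hC.le)
  have hΦ₂a : Φ₂ a / C₂ ≤ Φ₂ u := by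
    rw [div_le_iff₀ (by linarith), mul_comm]
    exact hΦ₂u a u ha hau hu1
  have hΦ₁u0 := hΦ₁.2.1 u hu
  exact div_le_div₀ (by have := hΦ₁u0.trans_le hΦ₁C₁; positivity)
    (mul_le_mul hΦ₁C₁ (pow_le_pow_left₀ (hl.2.1 u hu).le hla 2) (by positivity)
      (hΦ₁u0.le.trans hΦ₁C₁))
    (div_pos (hΦ₂.2.1 a ha) (by linarith)) hΦ₂a

end Profile

theorem eventually_rpow_one_div_lt {α m : ℝ} (hα : 0 < α) (hm : 0 < m) :
    ∀ᶠ t in 𝓝[>] (0 : ℝ), t ^ (1 / α) < m := by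
  have h : Tendsto (fun t : ℝ => t ^ (1 / α)) (𝓝 0) (𝓝 0) := by
    simpa [hα.ne'] using (Real.continuousAt_rpow_const 0 (1 / α) (Or.inr (by positivity))).tendsto
  exact (h.mono_left nhdsWithin_le_nhds).eventually_lt_const hm

theorem mul_rpow_neg_mul_rpow_div_eq {α t r : ℝ} (hα : α ≠ 0) (ht : 0 < t) (hr : 0 < r) (κ : ℝ) :
    t * r ^ (-α) * (t ^ (1 / α) / r) ^ (-(α + κ)) = r ^ κ * t ^ (-(κ / α)) := by
  rw [Real.div_rpow (by positivity) hr.le, ← Real.rpow_mul ht.le, Real.rpow_neg hr.le (α + κ),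
    Real.rpow_add hr, show 1 / α * -(α + κ) = -1 + -(κ / α) by field_simp; ring,
    Real.rpow_add ht, Real.rpow_neg_one, Real.rpow_neg hr.le]
  field_simp

section Boundary

variable {d : ℕ} {D : Set (EuclideanSpace ℝ (Fin d))}

theorem dd_pos_of_mem [Nontrivial (EuclideanSpace ℝ (Fin d))] (hD : IsOpen D)
    (hDb : Bornology.IsBounded D) {x : EuclideanSpace ℝ (Fin d)} (hx : x ∈ D) : 0 < dd D x := by
  have hfr : (frontier D).Nonempty :=
    nonempty_frontier_iff.2 ⟨⟨x, hx⟩, fun h => NormedSpace.unbounded_univ ℝ _ (h ▸ hDb)⟩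
  exact (isClosed_frontier.notMem_iff_infDist_pos hfr).1 fun h => (hD.frontier_eq ▸ h).2 hx

theorem eventually_dd_lt_and_dist_bounds {Q Q' : EuclideanSpace ℝ (Fin d)} (hQ : Q ∈ frontier D)
    (hQ' : Q' ∈ frontier D) {s a b : ℝ} (hs : 0 < s) (ha : a < dist Q Q') (hb : dist Q Q' < b) :
    ∀ᶠ p in 𝓝 Q ×ˢ 𝓝 Q', dd D p.1 < s ∧ dd D p.2 < s ∧ a < dist p.1 p.2 ∧ dist p.1 p.2 < b := by
  have hdd : Continuous (dd D) := continuous_infDist_pt _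
  have hddQ : ∀ z ∈ frontier D, dd D z < s := fun z hz => by
    rwa [dd, infDist_zero_of_mem hz]
  have hdist : Tendsto (fun p : EuclideanSpace ℝ (Fin d) × EuclideanSpace ℝ (Fin d) =>
      dist p.1 p.2) (𝓝 Q ×ˢ 𝓝 Q') (𝓝 (dist Q Q')) := by
    rw [← nhds_prod_eq]
    exact (continuous_fst.dist continuous_snd).continuousAt
  have h₁ : ∀ᶠ x in 𝓝 Q, dd D x < s := (hdd.tendsto Q).eventually_lt_const (hddQ Q hQ)
  have h₂ : ∀ᶠ y in 𝓝 Q', dd D y < s := (hdd.tendsto Q').eventually_lt_const (hddQ Q' hQ')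
  exact (h₁.prod_inl _).and ((h₂.prod_inr _).and
    ((hdist.eventually_const_lt ha).and (hdist.eventually_lt_const hb)))

end Boundary

section TwoJump

variable {d : ℕ} {α : ℝ} {D : Set (EuclideanSpace ℝ (Fin d))} {f g h Φ₀ Φ₁ Φ₂ l : ℝ → ℝ}
  {t : ℝ} {x y : EuclideanSpace ℝ (Fin d)}

def twoJumpRatio (α : ℝ) (D : Set (EuclideanSpace ℝ (Fin d))) (Φ₀ Φ₁ Φ₂ l : ℝ → ℝ) (t : ℝ)
    (x y : EuclideanSpace ℝ (Fin d)) : ℝ :=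
  t * dist x y ^ (-α) * Afun α D Φ₀ Φ₀ (fun _ => (1 : ℝ)) t x y / Afun α D Φ₁ Φ₂ l t x y

theorem Afun_eq_Afun_zero (hα : α ≠ 0) (ht : t ^ (1 / α) ≤ min (dd D x) (dd D y)) :
    Afun α D f g h t x y = Afun α D f g h 0 x y := by
  have h0 : (0 : ℝ) ^ (1 / α) = 0 := Real.zero_rpow (by simpa using hα)
  have hmin : 0 ≤ min (dd D x) (dd D y) := le_min infDist_nonneg infDist_nonneg
  simp only [Afun, h0, max_eq_left ht, max_eq_left (ht.trans min_le_max), max_eq_left hmin,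
    max_eq_left (hmin.trans min_le_max)]

theorem Afun_eq_of_dd_le (ht : 0 < t) (hx : dd D x ≤ t ^ (1 / α)) (hy : dd D y ≤ t ^ (1 / α))
    (hxy : t ^ (1 / α) ≤ dist x y) :
    Afun α D f g h t x y =
      f (t ^ (1 / α) / dist x y) * g (t ^ (1 / α) / dist x y) * h 1 := by
  simp only [Afun, max_eq_right ((min_le_left _ _).trans hx), max_eq_right (max_le hx hy),
    min_eq_left hxy, div_self (Real.rpow_pos_of_pos ht _).ne']

theorem tendsto_twoJumpRatio_nhds_zero (hα : 0 < α) (hx : 0 < dd D x) (hy : 0 < dd D y) :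
    Tendsto (fun t => twoJumpRatio α D Φ₀ Φ₁ Φ₂ l t x y) (𝓝[>] 0) (𝓝 0) := by
  set K := dist x y ^ (-α) * Afun α D Φ₀ Φ₀ (fun _ => (1 : ℝ)) 0 x y / Afun α D Φ₁ Φ₂ l 0 x y
  have hK : Tendsto (fun t : ℝ => t * K) (𝓝[>] 0) (𝓝 0) := by
    simpa using ((tendsto_id (x := 𝓝 (0 : ℝ))).mono_left nhdsWithin_le_nhds).mul_const K
  refine hK.congr' ?_
  filter_upwards [eventually_rpow_one_div_lt hα (lt_min hx hy)] with t ht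
  simp only [twoJumpRatio, Afun_eq_Afun_zero hα.ne' ht.le, K]
  ring

theorem twoJumpRatio_eq_profile (hΦ₁ : StdFun Φ₁) (hl : StdFun l) (hΦ₀ : ∀ r, Φ₀ r = Φ₁ r * l r)
    (ht : 0 < t) (hx : dd D x ≤ t ^ (1 / α)) (hy : dd D y ≤ t ^ (1 / α))
    (hxy : t ^ (1 / α) ≤ dist x y) :
    twoJumpRatio α D Φ₀ Φ₁ Φ₂ l t x y = t * dist x y ^ (-α) *
      (Φ₁ (t ^ (1 / α) / dist x y) * l (t ^ (1 / α) / dist x y) ^ 2 /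
        Φ₂ (t ^ (1 / α) / dist x y)) := by
  have hu : 0 < t ^ (1 / α) / dist x y :=
    div_pos (Real.rpow_pos_of_pos ht _) ((Real.rpow_pos_of_pos ht _).trans_le hxy)
  have hΦ₁u := hΦ₁.2.1 _ hu
  rw [twoJumpRatio, Afun_eq_of_dd_le ht hx hy hxy, Afun_eq_of_dd_le ht hx hy hxy, hΦ₀,
    hl.2.2 1 le_rfl]
  field_simp

theorem twoJumpRatio_near_boundary_mem_Icc (hα : 0 < α) (hΦ₁ : StdFun Φ₁) (hl : StdFun l)
    (hΦ₀ : ∀ r, Φ₀ r = Φ₁ r * l r) {c κ : ℝ} (hc : 0 ≤ c) (hκ : 0 ≤ κ)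
    (hlow : ∀ u, 0 < u → u ≤ 1 → c * u ^ (-(α + κ)) ≤ Φ₁ u * l u ^ 2 / Φ₂ u) {R M : ℝ} (hR : 0 < R)
    (hM : ∀ u, t ^ (1 / α) / (4 * R) ≤ u → u ≤ 1 → Φ₁ u * l u ^ 2 / Φ₂ u ≤ M)
    (ht : 0 < t) (hx : dd D x < t ^ (1 / α)) (hy : dd D y < t ^ (1 / α)) (hsR : t ^ (1 / α) < R)
    (hRxy : R < dist x y) (hxyR : dist x y < 4 * R) :
    twoJumpRatio α D Φ₀ Φ₁ Φ₂ l t x y ∈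
      Set.Icc (c * R ^ κ * t ^ (-(κ / α))) (t * R ^ (-α) * M) := by
  have hr : 0 < dist x y := hR.trans hRxy
  have key := mul_rpow_neg_mul_rpow_div_eq hα.ne' ht hr κ
  set s := t ^ (1 / α)
  set r := dist x y
  have hs : 0 < s := Real.rpow_pos_of_pos ht _
  have hu1 : s / r ≤ 1 := (div_le_one hr).2 (hsR.trans hRxy).le
  have hP := hlow (s / r) (div_pos hs hr) hu1
  rw [twoJumpRatio_eq_profile hΦ₁ hl hΦ₀ ht hx.le hy.le (hsR.trans hRxy).le]
  constructor
  · calc c * R ^ κ * t ^ (-(κ / α)) ≤ c * r ^ κ * t ^ (-(κ / α)) := by gcongr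
      _ = t * r ^ (-α) * (c * (s / r) ^ (-(α + κ))) := by
        rw [mul_assoc, ← key]
        ring
      _ ≤ _ := by gcongr
  · have hPM := hM (s / r) (div_le_div_of_nonneg_left hs.le hr hxyR.le) hu1
    have hP0 : 0 ≤ Φ₁ (s / r) * l (s / r) ^ 2 / Φ₂ (s / r) :=
      (mul_nonneg hc (Real.rpow_nonneg (div_pos hs hr).le _)).trans hP
    exact mul_le_mul (mul_le_mul_of_nonneg_left
      (Real.rpow_le_rpow_of_nonpos hR hRxy.le (neg_nonpos.2 hα.le)) ht.le) hPM hP0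
      (by positivity)

theorem tendsto_liminf_twoJumpRatio_atTop (hα : 0 < α) (hΦ₁ : StdFun Φ₁) (hl : StdFun l)
    (hΦ₀ : ∀ r, Φ₀ r = Φ₁ r * l r) {c κ : ℝ} (hc : 0 < c) (hκ : 0 < κ)
    (hlow : ∀ u, 0 < u → u ≤ 1 → c * u ^ (-(α + κ)) ≤ Φ₁ u * l u ^ 2 / Φ₂ u)
    (hup : ∀ a > 0, ∃ M, ∀ u, a ≤ u → u ≤ 1 → Φ₁ u * l u ^ 2 / Φ₂ u ≤ M)
    {Q Q' : EuclideanSpace ℝ (Fin d)} (hQ : Q ∈ frontier D) (hQ' : Q' ∈ frontier D)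
    (hQQ' : Q ≠ Q') :
    Tendsto (fun t => liminf (fun p => twoJumpRatio α D Φ₀ Φ₁ Φ₂ l t p.1 p.2)
      (𝓝[D] Q ×ˢ 𝓝[D] Q')) (𝓝[>] 0) atTop := by
  set R := dist Q Q' / 2 with hRdef
  have hR : 0 < R := half_pos (dist_pos.2 hQQ')
  have := mem_closure_iff_nhdsWithin_neBot.1 (frontier_subset_closure hQ)
  have := mem_closure_iff_nhdsWithin_neBot.1 (frontier_subset_closure hQ')
  have hlim : Tendsto (fun t : ℝ => c * R ^ κ * t ^ (-(κ / α))) (𝓝[>] 0) atTop :=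
    (tendsto_rpow_neg_nhdsGT_zero (neg_neg_of_pos (div_pos hκ hα))).const_mul_atTop
      (by positivity)
  refine tendsto_atTop_mono' _ ?_ hlim
  filter_upwards [self_mem_nhdsWithin, eventually_rpow_one_div_lt hα hR] with t (ht : 0 < t) hsR
  have hs : 0 < t ^ (1 / α) := Real.rpow_pos_of_pos ht _
  obtain ⟨M, hM⟩ := hup _ (div_pos hs (by positivity : 0 < 4 * R))
  have hnear : ∀ᶠ p in 𝓝[D] Q ×ˢ 𝓝[D] Q', dd D p.1 < t ^ (1 / α) ∧ dd D p.2 < t ^ (1 / α) ∧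
      R < dist p.1 p.2 ∧ dist p.1 p.2 < 4 * R :=
    (eventually_dd_lt_and_dist_bounds hQ hQ' hs (by linarith) (by linarith)).filter_mono
      (prod_mono nhdsWithin_le_nhds nhdsWithin_le_nhds)
  have hbounds := hnear.mono fun p ⟨hx, hy, hRp, hpR⟩ =>
    twoJumpRatio_near_boundary_mem_Icc hα hΦ₁ hl hΦ₀ hc.le hκ.le hlow hR hM ht hx hy hsR hRp hpR
  exact le_liminf_of_le (isCoboundedUnder_ge_of_eventually_le _ (hbounds.mono fun _ h => h.2))
    (hbounds.mono fun _ h => h.1)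

end TwoJump

theorem statement_8_general
    (d : ℕ)
    (D : Set (EuclideanSpace ℝ (Fin d))) (hDopen : IsOpen D)
    (hDbdd : Bornology.IsBounded D)
    (α β₁ β₁s β₂ : ℝ) (hα0 : 0 < α)
    (Φ₁ Φ₂ l : ℝ → ℝ)
    (hΦ₁ : StdFun Φ₁) (hΦ₁inc : AlmostIncreasingOn01 Φ₁)
    (hΦ₁up : UpperIndexIs Φ₁ β₁s)
    (hΦ₂ : StdFun Φ₂) (hΦ₂inc : AlmostIncreasingOn01 Φ₂)
    (hΦ₂low : LowerIndexIs Φ₂ β₂)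
    (hl : StdFun l) (hlscale : EllScaling l β₁ β₂)
    (Φ₀ : ℝ → ℝ) (hΦ₀def : ∀ r : ℝ, Φ₀ r = Φ₁ r * l r)
    (hgap : α + β₁s < β₂) :
    (∀ x ∈ D, ∀ y ∈ D, x ≠ y →
      Tendsto (fun t : ℝ =>
          t * dist x y ^ (-α) * Afun α D Φ₀ Φ₀ (fun _ => (1 : ℝ)) t x y /
            Afun α D Φ₁ Φ₂ l t x y)
        (𝓝[>] (0 : ℝ)) (𝓝 0)) ∧
    (∀ Qb ∈ frontier D, ∀ Qb' ∈ frontier D, Qb ≠ Qb' →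
      Tendsto (fun t : ℝ =>
          Filter.liminf
            (fun p : EuclideanSpace ℝ (Fin d) × EuclideanSpace ℝ (Fin d) =>
              t * dist p.1 p.2 ^ (-α) * Afun α D Φ₀ Φ₀ (fun _ => (1 : ℝ)) t p.1 p.2 /
                Afun α D Φ₁ Φ₂ l t p.1 p.2)
            ((𝓝[D] Qb) ×ˢ (𝓝[D] Qb')))
        (𝓝[>] (0 : ℝ)) atTop) := by
  refine ⟨fun x hx y hy hxy => ?_, fun Q hQ Q' hQ' hQQ' => ?_⟩
  · have : Nontrivial (EuclideanSpace ℝ (Fin d)) := ⟨⟨x, y, hxy⟩⟩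
    exact tendsto_twoJumpRatio_nhds_zero hα0 (dd_pos_of_mem hDopen hDbdd hx)
      (dd_pos_of_mem hDopen hDbdd hy)
  · set ε := β₂ - α - β₁s
    have hε : 0 < ε := by linarith
    obtain ⟨c, hc, hlow⟩ := exists_mul_rpow_le_profile hΦ₁ hΦ₂ hl
      (hΦ₁up.1 (β₁s + ε / 4) (by linarith)) (hΦ₂low.1 (β₂ - ε / 4) (by linarith))
      (hlscale.hasUpperScaling (by positivity : 0 < ε / 8))
    refine tendsto_liminf_twoJumpRatio_atTop hα0 hΦ₁ hl hΦ₀def hc (by positivity : 0 < ε / 4)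
      (fun u hu hu1 => ?_)
      (fun a ha => exists_profile_le hΦ₁ hΦ₁inc hΦ₂ hΦ₂inc hl zero_le_one
        (hlscale.hasLowerScaling one_pos) ha) hQ hQ' hQQ'
    convert hlow u hu hu1 using 3
    ring

/-- Lemma 3.5(i): if `β₂ > α + β₁*`, the two-jump term is negligible for
fixed interior points as `t → 0⁺`, but blows up near two distinct boundary points. -/
theorem statement_8
    (d : ℕ) (hd : 2 ≤ d)
    (D : Set (EuclideanSpace ℝ (Fin d))) (hDopen : IsOpen D)
    (hDbdd : Bornology.IsBounded D)
    (α β₁ β₁s β₂ β₂s : ℝ) (hα0 : 0 < α) (hα2 : α < 2)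
    (hβ₁ : 0 ≤ β₁) (hβ₁s : β₁ ≤ β₁s) (hβ₂ : 0 ≤ β₂) (hβ₂s : β₂ ≤ β₂s)
    (Φ₁ Φ₂ l : ℝ → ℝ)
    (hΦ₁ : StdFun Φ₁) (hΦ₁inc : AlmostIncreasingOn01 Φ₁)
    (hΦ₁low : LowerIndexIs Φ₁ β₁) (hΦ₁up : UpperIndexIs Φ₁ β₁s)
    (hΦ₂ : StdFun Φ₂) (hΦ₂inc : AlmostIncreasingOn01 Φ₂)
    (hΦ₂low : LowerIndexIs Φ₂ β₂) (hΦ₂up : UpperIndexIs Φ₂ β₂s)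
    (hl : StdFun l) (hlscale : EllScaling l β₁ β₂)
    (Φ₀ : ℝ → ℝ) (hΦ₀def : ∀ r : ℝ, Φ₀ r = Φ₁ r * l r)
    (hgap : α + β₁s < β₂) :
    (∀ x ∈ D, ∀ y ∈ D, x ≠ y →
      Tendsto (fun t : ℝ =>
          t * dist x y ^ (-α) * Afun α D Φ₀ Φ₀ (fun _ => (1 : ℝ)) t x y /
            Afun α D Φ₁ Φ₂ l t x y)
        (𝓝[>] (0 : ℝ)) (𝓝 0)) ∧
    (∀ Qb ∈ frontier D, ∀ Qb' ∈ frontier D, Qb ≠ Qb' →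
      Tendsto (fun t : ℝ =>
          Filter.liminf
            (fun p : EuclideanSpace ℝ (Fin d) × EuclideanSpace ℝ (Fin d) =>
              t * dist p.1 p.2 ^ (-α) * Afun α D Φ₀ Φ₀ (fun _ => (1 : ℝ)) t p.1 p.2 /
                Afun α D Φ₁ Φ₂ l t p.1 p.2)
            ((𝓝[D] Qb) ×ˢ (𝓝[D] Qb')))
        (𝓝[>] (0 : ℝ)) atTop) :=
  statement_8_general d D hDopen hDbdd α β₁ β₁s β₂ hα0 Φ₁ Φ₂ l hΦ₁ hΦ₁inc hΦ₁up hΦ₂ hΦ₂inc hΦ₂low hl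
    hlscale Φ₀ hΦ₀def hgap
end
end

section
/- Assume additionally that ℓ is almost increasing on (0,1] in the case β = 0 (f is almost increasing if there is C ≥ 1 with f(r) ≥ C⁻¹ sup_{s∈(0,r]} f(s)). Then for every a ≥ 1 there exists a constant C = C(a) > 0 such that Φ(s)·ℓ(s/k) ≤ C·Φ(r)·ℓ(r/k) for all 0 < s ≤ ar ≤ 1 and all k > 0. -/
open Set Metric MeasureTheory Real Filter Topology

noncomputable section

/-- Comparison for the slowly varying factor, valid on all of `(0,∞)`. -/
lemma ell_compare (l : ℝ → ℝ) (hl : StdFun l) (hls : SlowlyVaryingScaling l)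
    (ε : ℝ) (hε : 0 < ε) :
    ∃ C : ℝ, 1 ≤ C ∧ ∀ s r : ℝ, 0 < s → s ≤ r →
      l s ≤ C * (r / s) ^ ε * l r ∧ l r ≤ C * (r / s) ^ ε * l s := by
  obtain ⟨C, hC, h⟩ := hls ε hε
  have hC0 : (0:ℝ) < C := lt_of_lt_of_le one_pos hC
  refine ⟨C, hC, fun s r hs hsr => ?_⟩
  have hr : 0 < r := lt_of_lt_of_le hs hsr
  have hls' : 0 < l s := hl.2.1 s hs
  have hlr : 0 < l r := hl.2.1 r hr
  have hX : (0:ℝ) < r / s := by positivity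
  have hX1 : (1:ℝ) ≤ r / s := (one_le_div hs).mpr hsr
  have hXp : (0:ℝ) < (r/s) ^ ε := Real.rpow_pos_of_pos hX ε
  by_cases hr1 : r ≤ 1
  · obtain ⟨h1, h2⟩ := h s r hs hsr hr1
    rw [Real.rpow_neg hX.le] at h1
    constructor
    · have h1' : (C⁻¹ * ((r/s) ^ ε)⁻¹) * l s ≤ l r := (le_div_iff₀ hls').mp h1
      calc l s = (C * (r/s)^ε) * ((C⁻¹ * ((r/s)^ε)⁻¹) * l s) := by
            field_simp
        _ ≤ (C * (r/s)^ε) * l r := by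
            exact mul_le_mul_of_nonneg_left h1' (by positivity)
        _ = C * (r/s)^ε * l r := by ring
    · exact (div_le_iff₀ hls').mp h2
  · push_neg at hr1
    have hlr1 : l r = 1 := hl.2.2 r hr1.le
    by_cases hs1 : s ≤ 1
    · obtain ⟨h1, h2⟩ := h s 1 hs hs1 le_rfl
      rw [hl.2.2 1 le_rfl] at h1 h2
      have h1s : (0:ℝ) < 1 / s := by positivity
      have hXm : (1/s : ℝ) ^ ε ≤ (r/s) ^ ε := by
        apply Real.rpow_le_rpow (by positivity) _ hε.le
        exact (div_le_div_iff_of_pos_right hs).mpr hr1.le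
      rw [Real.rpow_neg h1s.le] at h1
      constructor
      · -- l s ≤ C * (1/s)^ε ≤ C * (r/s)^ε
        have h1' : (C⁻¹ * ((1/s) ^ ε)⁻¹) * l s ≤ 1 := (le_div_iff₀ hls').mp h1
        have hp1 : (0:ℝ) < (1/s) ^ ε := Real.rpow_pos_of_pos h1s ε
        have : l s ≤ C * (1/s)^ε := by
          calc l s = (C * (1/s)^ε) * ((C⁻¹ * ((1/s)^ε)⁻¹) * l s) := by field_simp
            _ ≤ (C * (1/s)^ε) * 1 := mul_le_mul_of_nonneg_left h1' (by positivity)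
            _ = C * (1/s)^ε := by ring
        rw [hlr1]
        have : l s ≤ C * (r/s)^ε := this.trans (by nlinarith)
        linarith
      · -- 1 ≤ C * (r/s)^ε * l s
        have h2' : 1 ≤ C * (1/s)^ε * l s := (div_le_iff₀ hls').mp h2
        rw [hlr1]
        have hm : C * (1/s)^ε * l s ≤ C * (r/s)^ε * l s := by
          have := mul_le_mul_of_nonneg_left
            (mul_le_mul_of_nonneg_right hXm hls'.le) hC0.le
          nlinarith [this]
        linarith
    · push_neg at hs1
      rw [hlr1, hl.2.2 s hs1.le]
      have h1 : (1:ℝ) ≤ (r/s) ^ ε := Real.one_le_rpow hX1 hε.le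
      constructor <;> nlinarith

/-- Almost monotonicity extended to all of `(0,∞)`. -/
lemma ell_mono (l : ℝ → ℝ) (hl : StdFun l) (hli : AlmostIncreasingOn01 l) :
    ∃ C : ℝ, 1 ≤ C ∧ ∀ s r : ℝ, 0 < s → s ≤ r → l s ≤ C * l r := by
  obtain ⟨C, hC, h⟩ := hli
  refine ⟨C, hC, fun s r hs hsr => ?_⟩
  by_cases hr1 : r ≤ 1
  · exact h s r hs hsr hr1
  · push_neg at hr1
    rw [hl.2.2 r hr1.le]
    by_cases hs1 : s ≤ 1
    · have := h s 1 hs hs1 le_rfl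
      rwa [hl.2.2 1 le_rfl] at this
    · push_neg at hs1
      rw [hl.2.2 s hs1.le]
      linarith

/-- Lemma 8.1(i): almost monotonicity of `Φ(s)ℓ(s/k)`. -/
theorem statement_10
    (β βs : ℝ) (hβ : 0 ≤ β) (hβs : β ≤ βs)
    (Φ l : ℝ → ℝ)
    (hΦ : StdFun Φ) (hΦinc : AlmostIncreasingOn01 Φ)
    (hΦlow : LowerIndexIs Φ β) (hΦup : UpperIndexIs Φ βs)
    (hl : StdFun l) (hlscale : SlowlyVaryingScaling l)
    (hlinc : β = 0 → AlmostIncreasingOn01 l) :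
    ∀ a : ℝ, 1 ≤ a → ∃ C : ℝ, 0 < C ∧
      ∀ s r k : ℝ, 0 < s → s ≤ a * r → a * r ≤ 1 → 0 < k →
        Φ s * l (s / k) ≤ C * (Φ r * l (r / k)) := by
  intro a ha
  have ha0 : (0:ℝ) < a := lt_of_lt_of_le one_pos ha
  -- Constant for the case s ≤ r
  have hA : ∃ CA : ℝ, 0 < CA ∧ ∀ s r k : ℝ, 0 < s → s ≤ r → r ≤ 1 → 0 < k →
      Φ s * l (s / k) ≤ CA * (Φ r * l (r / k)) := by
    rcases eq_or_lt_of_le hβ with hβ0 | hβpos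
    · -- β = 0 : l is almost increasing
      obtain ⟨C1, hC1, hΦi⟩ := hΦinc
      obtain ⟨C2, hC2, hli⟩ := ell_mono l hl (hlinc hβ0.symm)
      refine ⟨C1 * C2, by positivity, fun s r k hs hsr hr1 hk => ?_⟩
      have hΦs : 0 < Φ s := hΦ.2.1 s hs
      have h1 := hΦi s r hs hsr hr1
      have h2 := hli (s/k) (r/k) (by positivity) ((div_le_div_iff_of_pos_right hk).mpr hsr)
      have hlsk : 0 ≤ l (s/k) := (hl.2.1 _ (by positivity)).le
      have hΦr : 0 < Φ r := hΦ.2.1 r (lt_of_lt_of_le hs hsr)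
      calc Φ s * l (s/k) ≤ (C1 * Φ r) * (C2 * l (r/k)) := by
            apply mul_le_mul h1 h2 hlsk (by positivity)
        _ = C1 * C2 * (Φ r * l (r/k)) := by ring
    · -- β > 0 : lower scaling of Φ beats slow variation of l
      obtain ⟨Cb, hCb, hΦb⟩ := hΦlow.1 (β/2) (by linarith)
      obtain ⟨Cε, hCε, hle⟩ := ell_compare l hl hlscale (β/4) (by linarith)
      have hCb0 : (0:ℝ) < Cb := lt_of_lt_of_le one_pos hCb
      refine ⟨Cb * Cε, by positivity, fun s r k hs hsr hr1 hk => ?_⟩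
      have hr : 0 < r := lt_of_lt_of_le hs hsr
      have hΦs : 0 < Φ s := hΦ.2.1 s hs
      have hΦr : 0 < Φ r := hΦ.2.1 r hr
      have hX : (0:ℝ) < r / s := by positivity
      have hX1 : (1:ℝ) ≤ r / s := (one_le_div hs).mpr hsr
      have hlrk : 0 < l (r/k) := hl.2.1 _ (by positivity)
      -- Φ s * (r/s)^(β/2) ≤ Cb * Φ r
      have h1 := hΦb s r hs hsr hr1
      have h1'' : (Cb⁻¹ * (r/s)^(β/2)) * Φ s ≤ Φ r := (le_div_iff₀ hΦs).mp h1
      have hΦcomp : Φ s * (r/s)^(β/2) ≤ Cb * Φ r := by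
        have : Φ s * (r/s)^(β/2) = Cb * ((Cb⁻¹ * (r/s)^(β/2)) * Φ s) := by
          field_simp
        rw [this]
        exact mul_le_mul_of_nonneg_left h1'' hCb0.le
      -- l (s/k) ≤ Cε * (r/s)^(β/4) * l (r/k)
      have hq : (r/k) / (s/k) = r / s := by
        rw [div_div_div_comm, div_self hk.ne', div_one]
      have hlcomp : l (s/k) ≤ Cε * (r/s)^(β/4) * l (r/k) := by
        have := (hle (s/k) (r/k) (by positivity) ((div_le_div_iff_of_pos_right hk).mpr hsr)).1
        rwa [hq] at this
      have hexp : (r/s)^(β/4) ≤ (r/s)^(β/2) :=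
        Real.rpow_le_rpow_of_exponent_le hX1 (by linarith)
      calc Φ s * l (s/k) ≤ Φ s * (Cε * (r/s)^(β/4) * l (r/k)) :=
            mul_le_mul_of_nonneg_left hlcomp hΦs.le
        _ ≤ Φ s * (Cε * (r/s)^(β/2) * l (r/k)) := by
            apply mul_le_mul_of_nonneg_left _ hΦs.le
            apply mul_le_mul_of_nonneg_right _ hlrk.le
            exact mul_le_mul_of_nonneg_left hexp (by linarith)
        _ = (Cε * l (r/k)) * (Φ s * (r/s)^(β/2)) := by ring
        _ ≤ (Cε * l (r/k)) * (Cb * Φ r) :=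
            mul_le_mul_of_nonneg_left hΦcomp (by positivity)
        _ = Cb * Cε * (Φ r * l (r/k)) := by ring
  obtain ⟨CA, hCA0, hCA⟩ := hA
  -- Constants for the case r < s ≤ a*r
  obtain ⟨C2, hC2, hΦu⟩ := hΦup.1 (βs + 1) (by linarith)
  obtain ⟨C3, hC3, hl3⟩ := ell_compare l hl hlscale 1 one_pos
  have hC20 : (0:ℝ) < C2 := lt_of_lt_of_le one_pos hC2
  have hap : (0:ℝ) < a ^ (βs + 1) := Real.rpow_pos_of_pos ha0 _
  refine ⟨CA + C2 * a ^ (βs + 1) * (C3 * a), by positivity, fun s r k hs hsar har1 hk => ?_⟩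
  have hr : 0 < r := by nlinarith
  have hra : r ≤ a * r := le_mul_of_one_le_left hr.le ha
  have hr1 : r ≤ 1 := hra.trans har1
  have hs1 : s ≤ 1 := hsar.trans har1
  have hΦr : 0 < Φ r := hΦ.2.1 r hr
  have hlrk : 0 < l (r/k) := hl.2.1 _ (by positivity)
  have hrest : 0 ≤ C2 * a ^ (βs + 1) * (C3 * a) * (Φ r * l (r/k)) := by positivity
  by_cases hsr : s ≤ r
  · have := hCA s r k hs hsr hr1 hk
    nlinarith
  · push_neg at hsr
    have hΦs : 0 < Φ s := hΦ.2.1 s hs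
    have hXa : s / r ≤ a := (div_le_iff₀ hr).mpr (by linarith [hsar])
    have hX1 : (1:ℝ) ≤ s / r := (one_le_div hr).mpr hsr.le
    -- Φ s ≤ C2 * a^(βs+1) * Φ r
    have h1 := hΦu r s hr hsr.le hs1
    have h1' : Φ s ≤ C2 * (s/r) ^ (βs + 1) * Φ r := (div_le_iff₀ hΦr).mp h1
    have hpow : (s/r) ^ (βs + 1) ≤ a ^ (βs + 1) :=
      Real.rpow_le_rpow (by positivity) hXa (by linarith)
    have hΦcomp : Φ s ≤ C2 * a ^ (βs + 1) * Φ r := by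
      have := mul_le_mul_of_nonneg_right
        (mul_le_mul_of_nonneg_left hpow hC20.le) hΦr.le
      nlinarith [this]
    -- l (s/k) ≤ C3 * a * l (r/k)
    have hq : (s/k) / (r/k) = s / r := by
      rw [div_div_div_comm, div_self hk.ne', div_one]
    have hlc := (hl3 (r/k) (s/k) (by positivity) ((div_le_div_iff_of_pos_right hk).mpr hsr.le)).2
    rw [hq, Real.rpow_one] at hlc
    have hlcomp : l (s/k) ≤ C3 * a * l (r/k) := by
      have hC30 : (0:ℝ) < C3 := lt_of_lt_of_le one_pos hC3
      have := mul_le_mul_of_nonneg_right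
        (mul_le_mul_of_nonneg_left hXa hC30.le) hlrk.le
      nlinarith [this]
    have hlsk : 0 ≤ l (s/k) := (hl.2.1 _ (by positivity)).le
    have key : Φ s * l (s/k) ≤ (C2 * a ^ (βs+1) * Φ r) * (C3 * a * l (r/k)) :=
      mul_le_mul hΦcomp hlcomp hlsk (by positivity)
    have hΦlp : 0 ≤ Φ r * l (r/k) := by positivity
    nlinarith [mul_nonneg hCA0.le hΦlp]
end
end

section
/- Assume additionally that ℓ is almost decreasing on (0,1] in the case β = 0 (f is almost decreasing if there is C ≥ 1 with f(r) ≤ C·inf_{s∈(0,r]} f(s)). Then for every a ≥ 1 there exists a constant C = C(a) > 0 such that Φ(s)·ℓ(k/s) ≤ C·Φ(r)·ℓ(k/r) for all 0 < s ≤ ar ≤ 1 and all k > 0. -/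
open Set Metric MeasureTheory Real Filter Topology

noncomputable section

lemma stdfun_cap {f : ℝ → ℝ} (hf : StdFun f) {x : ℝ} : 0 < x → f (min x 1) = f x := by
  intro _
  rcases le_total x 1 with h | h
  · rw [min_eq_left h]
  · rw [min_eq_right h, hf.2.2 x h, hf.2.2 1 le_rfl]

lemma cap_ratio {u v : ℝ} (hu : 0 < u) (huv : u ≤ v) : min v 1 / min u 1 ≤ v / u := by
  rcases le_total v 1 with hv | hv
  · rw [min_eq_left hv, min_eq_left (huv.trans hv)]
  · rw [min_eq_right hv]
    rcases le_total 1 u with h1 | h1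
    · rw [min_eq_right h1, div_one]
      exact (one_le_div hu).2 huv
    · rw [min_eq_left h1]
      gcongr

lemma inv_scaling_aux {C Z x y : ℝ} (hC : 0 < C) (hZ : 0 < Z) (hx : 0 < x)
    (h : C⁻¹ * Z ≤ y / x) : x ≤ C * Z⁻¹ * y := by
  rw [le_div_iff₀ hx] at h
  calc x = C * Z⁻¹ * (C⁻¹ * Z * x) := by
        rw [show C * Z⁻¹ * (C⁻¹ * Z * x) = (C * C⁻¹) * (Z⁻¹ * Z) * x by ring,
          mul_inv_cancel₀ hC.ne', inv_mul_cancel₀ hZ.ne', one_mul, one_mul]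
    _ ≤ C * Z⁻¹ * y := by
        apply mul_le_mul_of_nonneg_left h
        positivity

lemma ell_ratio {l : ℝ → ℝ} (hl : StdFun l) (hls : SlowlyVaryingScaling l)
    (ε : ℝ) (hε : 0 < ε) :
    ∃ C : ℝ, 1 ≤ C ∧ ∀ u v : ℝ, 0 < u → u ≤ v →
      l u ≤ C * (v / u) ^ ε * l v ∧ l v ≤ C * (v / u) ^ ε * l u := by
  obtain ⟨C, hC1, hC⟩ := hls ε hε
  refine ⟨C, hC1, fun u v hu huv => ?_⟩
  have hC0 : 0 < C := lt_of_lt_of_le one_pos hC1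
  have hv : 0 < v := hu.trans_le huv
  set u' := min u 1 with hu'def
  set v' := min v 1 with hv'def
  have hu' : 0 < u' := lt_min hu one_pos
  have hu'v' : u' ≤ v' := min_le_min huv le_rfl
  have hv'1 : v' ≤ 1 := min_le_right _ _
  have hv' : 0 < v' := hu'.trans_le hu'v'
  have key := hC u' v' hu' hu'v' hv'1
  have hlu : l u' = l u := stdfun_cap hl hu
  have hlv : l v' = l v := stdfun_cap hl hv
  have hru : 0 < v' / u' := div_pos hv' hu'
  have hratio : v' / u' ≤ v / u := cap_ratio hu huv
  have hpow : (v' / u') ^ ε ≤ (v / u) ^ ε := Real.rpow_le_rpow hru.le hratio hε.le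
  have hZ : 0 < (v' / u') ^ ε := Real.rpow_pos_of_pos hru ε
  have hlu0 : 0 < l u := hl.2.1 u hu
  have hlv0 : 0 < l v := hl.2.1 v hv
  constructor
  · -- from lower bound
    have h1 := key.1
    rw [Real.rpow_neg hru.le] at h1
    have h2 : C⁻¹ * ((v' / u') ^ ε)⁻¹ ≤ l v / l u := by rw [← hlu, ← hlv]; exact h1
    have h3 : l u ≤ C * (((v' / u') ^ ε)⁻¹)⁻¹ * l v :=
      inv_scaling_aux hC0 (inv_pos.2 hZ) hlu0 h2
    rw [inv_inv] at h3
    calc l u ≤ C * (v' / u') ^ ε * l v := h3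
      _ ≤ C * (v / u) ^ ε * l v := by
          apply mul_le_mul_of_nonneg_right _ hlv0.le
          exact mul_le_mul_of_nonneg_left hpow hC0.le
  · -- from upper bound
    have h1 := key.2
    rw [hlu, hlv] at h1
    have h2 : l v ≤ C * (v' / u') ^ ε * l u := by
      rw [div_le_iff₀ hlu0] at h1
      linarith
    calc l v ≤ C * (v' / u') ^ ε * l u := h2
      _ ≤ C * (v / u) ^ ε * l u := by
          apply mul_le_mul_of_nonneg_right _ hlu0.le
          exact mul_le_mul_of_nonneg_left hpow hC0.le

/-- Lemma 8.1(ii): almost monotonicity of `Φ(s)ℓ(k/s)`. -/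
theorem statement_11
    (β βs : ℝ) (hβ : 0 ≤ β) (hβs : β ≤ βs)
    (Φ l : ℝ → ℝ)
    (hΦ : StdFun Φ) (hΦinc : AlmostIncreasingOn01 Φ)
    (hΦlow : LowerIndexIs Φ β) (hΦup : UpperIndexIs Φ βs)
    (hl : StdFun l) (hlscale : SlowlyVaryingScaling l)
    (hldec : β = 0 → AlmostDecreasingOn01 l) :
    ∀ a : ℝ, 1 ≤ a → ∃ C : ℝ, 0 < C ∧
      ∀ s r k : ℝ, 0 < s → s ≤ a * r → a * r ≤ 1 → 0 < k →
        Φ s * l (k / s) ≤ C * (Φ r * l (k / r)) := by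
  intro a ha
  have ha0 : 0 < a := lt_of_lt_of_le one_pos ha
  obtain ⟨Cu, hCu1, hCuf⟩ := hΦup.1 (βs + 1) (by linarith)
  obtain ⟨C1, hC11, hC1f⟩ := ell_ratio hl hlscale 1 one_pos
  obtain ⟨Ci, hCi1, hCif⟩ := hΦinc
  have hCu0 : 0 < Cu := lt_of_lt_of_le one_pos hCu1
  have hC10 : 0 < C1 := lt_of_lt_of_le one_pos hC11
  have hCi0 : 0 < Ci := lt_of_lt_of_le one_pos hCi1
  -- Case B : s ≤ r
  obtain ⟨CB, hCB0, hB⟩ : ∃ CB : ℝ, 0 < CB ∧ ∀ s r k : ℝ, 0 < s → s ≤ r → r ≤ 1 → 0 < k →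
      Φ s * l (k / s) ≤ CB * (Φ r * l (k / r)) := by
    rcases eq_or_lt_of_le hβ with h0 | hβpos
    · -- β = 0
      obtain ⟨Cd, hCd1, hCdf⟩ := hldec h0.symm
      have hCd0 : 0 < Cd := lt_of_lt_of_le one_pos hCd1
      refine ⟨Ci * Cd, by positivity, fun s r k hs hsr hr1 hk => ?_⟩
      have hr : 0 < r := hs.trans_le hsr
      have hΦs : Φ s ≤ Ci * Φ r := hCif s r hs hsr hr1
      have hls0 : 0 < l (k / s) := hl.2.1 _ (div_pos hk hs)
      have hlr0 : 0 < l (k / r) := hl.2.1 _ (div_pos hk hr)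
      have hΦr0 : 0 < Φ r := hΦ.2.1 r hr
      have hΦs0 : 0 < Φ s := hΦ.2.1 s hs
      have huv : k / r ≤ k / s := by
        apply div_le_div_of_nonneg_left hk.le hs hsr
      have hlbound : l (k / s) ≤ Cd * l (k / r) := by
        have h1 : l (min (k / s) 1) ≤ Cd * l (min (k / r) 1) :=
          hCdf (min (k / r) 1) (min (k / s) 1) (lt_min (div_pos hk hr) one_pos)
            (min_le_min huv le_rfl) (min_le_right _ _)
        rwa [stdfun_cap hl (div_pos hk hs), stdfun_cap hl (div_pos hk hr)] at h1
      calc Φ s * l (k / s) ≤ (Ci * Φ r) * (Cd * l (k / r)) :=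
            mul_le_mul hΦs hlbound hls0.le (by positivity)
        _ = Ci * Cd * (Φ r * l (k / r)) := by ring
    · -- β > 0
      obtain ⟨Cl, hCl1, hClf⟩ := hΦlow.1 (β / 2) (by linarith)
      obtain ⟨C2, hC21, hC2f⟩ := ell_ratio hl hlscale (β / 2) (by linarith)
      have hCl0 : 0 < Cl := lt_of_lt_of_le one_pos hCl1
      have hC20 : 0 < C2 := lt_of_lt_of_le one_pos hC21
      refine ⟨Cl * C2, by positivity, fun s r k hs hsr hr1 hk => ?_⟩
      have hr : 0 < r := hs.trans_le hsr
      have hΦr0 : 0 < Φ r := hΦ.2.1 r hr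
      have hΦs0 : 0 < Φ s := hΦ.2.1 s hs
      have hls0 : 0 < l (k / s) := hl.2.1 _ (div_pos hk hs)
      have hlr0 : 0 < l (k / r) := hl.2.1 _ (div_pos hk hr)
      set Z := (r / s) ^ (β / 2) with hZdef
      have hZ0 : 0 < Z := Real.rpow_pos_of_pos (div_pos hr hs) _
      have hΦbound : Φ s ≤ Cl * Z⁻¹ * Φ r :=
        inv_scaling_aux hCl0 hZ0 hΦs0 (hClf s r hs hsr hr1)
      have huv : k / r ≤ k / s := div_le_div_of_nonneg_left hk.le hs hsr
      have hratio : (k / s) / (k / r) = r / s := by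
        field_simp
      have hlbound : l (k / s) ≤ C2 * Z * l (k / r) := by
        have h1 := (hC2f (k / r) (k / s) (div_pos hk hr) huv).2
        rwa [hratio] at h1
      calc Φ s * l (k / s) ≤ (Cl * Z⁻¹ * Φ r) * (C2 * Z * l (k / r)) :=
            mul_le_mul hΦbound hlbound hls0.le (by positivity)
        _ = Cl * C2 * (Z⁻¹ * Z) * (Φ r * l (k / r)) := by ring
        _ = Cl * C2 * (Φ r * l (k / r)) := by
            rw [inv_mul_cancel₀ hZ0.ne', mul_one]
  -- Combine with Case A : r ≤ s
  set CA := Cu * a ^ (βs + 1) * (C1 * a) with hCAdef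
  have hCA0 : 0 < CA := by
    have : 0 < a ^ (βs + 1) := Real.rpow_pos_of_pos ha0 _
    positivity
  refine ⟨max CA CB, lt_max_of_lt_left hCA0, fun s r k hs hsar har1 hk => ?_⟩
  have hr : 0 < r := by nlinarith
  have hrar : r ≤ a * r := le_mul_of_one_le_left hr.le ha
  have hr1 : r ≤ 1 := hrar.trans har1
  have hs1 : s ≤ 1 := hsar.trans har1
  have hΦr0 : 0 < Φ r := hΦ.2.1 r hr
  have hlr0 : 0 < l (k / r) := hl.2.1 _ (div_pos hk hr)
  have hP0 : 0 < Φ r * l (k / r) := by positivity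
  rcases le_total s r with hsr | hrs
  · calc Φ s * l (k / s) ≤ CB * (Φ r * l (k / r)) := hB s r k hs hsr hr1 hk
      _ ≤ max CA CB * (Φ r * l (k / r)) :=
          mul_le_mul_of_nonneg_right (le_max_right _ _) hP0.le
  · -- r ≤ s
    have hΦs0 : 0 < Φ s := hΦ.2.1 s hs
    have hls0 : 0 < l (k / s) := hl.2.1 _ (div_pos hk hs)
    have hsra : s / r ≤ a := (div_le_iff₀ hr).2 (by linarith [hsar])
    have hsr1 : 1 ≤ s / r := (one_le_div hr).2 hrs
    have hΦbound : Φ s ≤ Cu * a ^ (βs + 1) * Φ r := by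
      have h1 := hCuf r s hr hrs hs1
      rw [div_le_iff₀ hΦr0] at h1
      calc Φ s ≤ Cu * (s / r) ^ (βs + 1) * Φ r := h1
        _ ≤ Cu * a ^ (βs + 1) * Φ r := by
            apply mul_le_mul_of_nonneg_right _ hΦr0.le
            apply mul_le_mul_of_nonneg_left _ hCu0.le
            exact Real.rpow_le_rpow (by positivity) hsra (by linarith)
    have hlbound : l (k / s) ≤ C1 * a * l (k / r) := by
      have huv : k / s ≤ k / r := div_le_div_of_nonneg_left hk.le hr hrs
      have h1 := (hC1f (k / s) (k / r) (div_pos hk hs) huv).1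
      have hratio : (k / r) / (k / s) = s / r := by field_simp
      rw [hratio, Real.rpow_one] at h1
      calc l (k / s) ≤ C1 * (s / r) * l (k / r) := h1
        _ ≤ C1 * a * l (k / r) := by
            apply mul_le_mul_of_nonneg_right _ hlr0.le
            exact mul_le_mul_of_nonneg_left hsra hC10.le
    calc Φ s * l (k / s) ≤ (Cu * a ^ (βs + 1) * Φ r) * (C1 * a * l (k / r)) :=
          mul_le_mul hΦbound hlbound hls0.le (by positivity)
      _ = CA * (Φ r * l (k / r)) := by rw [hCAdef]; ring
      _ ≤ max CA CB * (Φ r * l (k / r)) :=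
          mul_le_mul_of_nonneg_right (le_max_left _ _) hP0.le
end
end

section
/- Let q ≥ 0. There exists a constant C > 0, independent of r, t, k, m, such that for all r > 0, all 0 < t ≤ r^α, and all k, m > 0 satisfying either k ≥ t^{1/α} or q < α + β, one has ∫_0^t (1 ∧ k/s^{1/α})^q · Φ((k∨s^{1/α})/r) · ℓ(m/(k∨s^{1/α})) ds ≤ C·t·(1 ∧ k/t^{1/α})^q · Φ((k∨t^{1/α})/r) · ℓ(m/(k∨t^{1/α})). -/
/-!
Put `w = k ∨ s^{1/α}` and `T = k ∨ t^{1/α}`. Since `1 ∧ k/x = k/(k ∨ x)`, the integrand is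
`g(w) = (k/w)^q Φ(w/r) ℓ(m/w)` and the right-hand side is `C t g(T)`. If `t^{1/α} ≤ k`, then
`w = T` on `(0, t)`. Otherwise `T = t^{1/α} ≤ r`, and the lower scaling of `Φ` with index
`b < β` together with the upper scaling of `ℓ` with index `ε` give
`g(w) ≤ C (T/w)^{q-b+ε} g(T) ≤ C (t/s)^p g(T)` with `p = (q-b+ε)⁺/α`. When `q < α + β` we can
choose `b, ε` so that `p < 1`, and then `∫₀ᵗ (t/s)^p ds = t/(1-p)`.
-/

open Set Metric MeasureTheory Real Filter Topology

noncomputable section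

theorem min_one_div_eq_div_max {k x : ℝ} (hk : 0 < k) (hx : 0 < x) :
    min 1 (k / x) = k / max k x := by
  rcases le_total k x with h | h
  · rw [max_eq_right h, min_eq_right ((div_le_one hx).2 h)]
  · rw [max_eq_left h, div_self hk.ne', min_eq_left ((one_le_div hx).2 h)]

theorem HasLowerScaling.exists_le_mul_rpow {f : ℝ → ℝ} {b : ℝ} (hf : HasLowerScaling f b)
    (hpos : ∀ x, 0 < x → 0 < f x) :
    ∃ C, 1 ≤ C ∧ ∀ x y, 0 < x → x ≤ y → y ≤ 1 → f x ≤ C * (x / y) ^ b * f y := by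
  obtain ⟨C, hC, hsc⟩ := hf
  refine ⟨C, hC, fun x y hx hxy hy1 => ?_⟩
  have hy := hx.trans_le hxy
  have key := (le_div_iff₀ (hpos x hx)).1 (hsc x y hx hxy hy1)
  have hinv : (x / y) ^ b = ((y / x) ^ b)⁻¹ := by
    rw [← Real.inv_rpow (by positivity), inv_div]
  rw [hinv]
  calc f x = C * ((y / x) ^ b)⁻¹ * (C⁻¹ * (y / x) ^ b * f x) := by
        field_simp
    _ ≤ C * ((y / x) ^ b)⁻¹ * f y := by gcongr

theorem HasUpperScaling.exists_le_mul_rpow_of_eq_one {f : ℝ → ℝ} {b : ℝ}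
    (hf : HasUpperScaling f b) (hb : 0 ≤ b) (hpos : ∀ x, 0 < x → 0 < f x)
    (hone : ∀ x, 1 ≤ x → f x = 1) :
    ∃ C, 1 ≤ C ∧ ∀ x y, 0 < x → x ≤ y → f y ≤ C * (y / x) ^ b * f x := by
  obtain ⟨C, hC, hsc⟩ := hf
  refine ⟨C, hC, fun x y hx hxy => ?_⟩
  have hscale : ∀ y', x ≤ y' → y' ≤ 1 → f y' ≤ C * (y' / x) ^ b * f x := fun y' hxy' hy' =>
    (div_le_iff₀ (hpos x hx)).1 (hsc x y' hx hxy' hy')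
  rcases le_total y 1 with hy1 | hy1
  · exact hscale y hxy hy1
  rcases le_total x 1 with hx1 | hx1
  · calc f y = f 1 := by rw [hone y hy1, hone 1 le_rfl]
      _ ≤ C * (1 / x) ^ b * f x := hscale 1 hx1 le_rfl
      _ ≤ C * (y / x) ^ b * f x := by
        have := hpos x hx
        gcongr
  · rw [hone y hy1, hone x hx1, mul_one]
    exact one_le_mul_of_one_le_of_one_le hC (Real.one_le_rpow ((one_le_div hx).2 hxy) hb)

theorem SlowlyVaryingScaling.hasUpperScaling {l : ℝ → ℝ} (hl : SlowlyVaryingScaling l)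
    {ε : ℝ} (hε : 0 < ε) : HasUpperScaling l ε := by
  obtain ⟨C, hC, hsc⟩ := hl ε hε
  exact ⟨C, hC, fun s r hs hsr hr => (hsc s r hs hsr hr).2⟩

section ScaledWeight

variable {Φ l : ℝ → ℝ} {q r k m : ℝ}

def scaledWeight (q : ℝ) (Φ l : ℝ → ℝ) (r k m w : ℝ) : ℝ :=
  (k / w) ^ q * Φ (w / r) * l (m / w)

theorem scaledWeight_nonneg (hΦpos : ∀ x, 0 < x → 0 < Φ x) (hlpos : ∀ x, 0 < x → 0 < l x)
    (hr : 0 < r) (hk : 0 < k) (hm : 0 < m) {w : ℝ} (hw : 0 < w) :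
    0 ≤ scaledWeight q Φ l r k m w := by
  have := hΦpos (w / r) (by positivity)
  have := hlpos (m / w) (by positivity)
  unfold scaledWeight
  positivity

theorem min_one_div_rpow_mul_eq_scaledWeight (hk : 0 < k) {x : ℝ} (hx : 0 < x) :
    min 1 (k / x) ^ q * Φ (max k x / r) * l (m / max k x) = scaledWeight q Φ l r k m (max k x) := by
  rw [min_one_div_eq_div_max hk hx, scaledWeight]

theorem scaledWeight_le_of_le {b ε CΦ Cl w T : ℝ}
    (hΦpos : ∀ x, 0 < x → 0 < Φ x) (hlpos : ∀ x, 0 < x → 0 < l x)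
    (hΦ : ∀ x y, 0 < x → x ≤ y → y ≤ 1 → Φ x ≤ CΦ * (x / y) ^ b * Φ y)
    (hl : ∀ x y, 0 < x → x ≤ y → l y ≤ Cl * (y / x) ^ ε * l x)
    (hk : 0 < k) (hm : 0 < m) (hw : 0 < w) (hwT : w ≤ T) (hTr : T ≤ r) :
    scaledWeight q Φ l r k m w ≤ CΦ * Cl * (T / w) ^ (q - b + ε) * scaledWeight q Φ l r k m T := by
  have hT := hw.trans_le hwT
  have hr := hT.trans_le hTr
  have hΦw := hΦ (w / r) (T / r) (by positivity) (by gcongr) ((div_le_one hr).2 hTr)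
  have hlw := hl (m / T) (m / w) (by positivity) (by gcongr)
  rw [div_div_div_cancel_right₀ hr.ne'] at hΦw
  rw [div_div_div_cancel_left' _ _ hm.ne'] at hlw
  have hΦw0 := hΦpos (w / r) (by positivity)
  have hlw0 := hlpos (m / w) (by positivity)
  have hexp : (k / w) ^ q * (w / T) ^ b * (T / w) ^ ε = (T / w) ^ (q - b + ε) * (k / T) ^ q := by
    have hx : 0 < T / w := by positivity
    rw [Real.rpow_add hx, Real.rpow_sub hx, show k / w = T / w * (k / T) by field_simp,
      show w / T = (T / w)⁻¹ by rw [inv_div], Real.mul_rpow hx.le (by positivity),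
      Real.inv_rpow hx.le]
    field_simp
  calc scaledWeight q Φ l r k m w
      ≤ (k / w) ^ q * (CΦ * (w / T) ^ b * Φ (T / r)) * (Cl * (T / w) ^ ε * l (m / T)) := by
        unfold scaledWeight
        gcongr
        exact mul_nonneg (by positivity) (hΦw0.le.trans hΦw)
    _ = CΦ * Cl * ((k / w) ^ q * (w / T) ^ b * (T / w) ^ ε) * (Φ (T / r) * l (m / T)) := by ring
    _ = CΦ * Cl * (T / w) ^ (q - b + ε) * scaledWeight q Φ l r k m T := by
        rw [hexp, scaledWeight]; ring

end ScaledWeight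

section DivRpowIntegral

variable {t p : ℝ}

theorem div_rpow_eqOn_Ioo (ht : 0 < t) :
    EqOn (fun s => (t / s) ^ p) (fun s => t ^ p * s ^ (-p)) (Ioo 0 t) := fun s hs => by
  dsimp only
  rw [Real.div_rpow ht.le hs.1.le, Real.rpow_neg hs.1.le, div_eq_mul_inv]

theorem integrableOn_Ioo_div_rpow (ht : 0 < t) (hp : p < 1) :
    IntegrableOn (fun s => (t / s) ^ p) (Ioo 0 t) := by
  have hpow : IntegrableOn (fun s : ℝ => s ^ (-p)) (Ioo 0 t) :=
    (intervalIntegral.intervalIntegrable_rpow' (by linarith)).1.mono_set Ioo_subset_Ioc_self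
  exact IntegrableOn.congr_fun (hpow.const_mul (t ^ p)) (div_rpow_eqOn_Ioo ht).symm
    measurableSet_Ioo

theorem setIntegral_Ioo_div_rpow (ht : 0 < t) (hp : p < 1) :
    ∫ s in Ioo 0 t, (t / s) ^ p = t / (1 - p) := by
  have h1p : 0 < 1 - p := by linarith
  rw [setIntegral_congr_fun measurableSet_Ioo (div_rpow_eqOn_Ioo ht), integral_const_mul,
    ← integral_Ioc_eq_integral_Ioo, ← intervalIntegral.integral_of_le ht.le,
    integral_rpow (Or.inl (by linarith)), neg_add_eq_sub, Real.zero_rpow h1p.ne', sub_zero,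
    mul_div_assoc', ← Real.rpow_add ht, add_sub_cancel, Real.rpow_one]

theorem setIntegral_Ioo_le_of_le_mul_div_rpow {f : ℝ → ℝ} {M : ℝ} (ht : 0 < t) (hp : p < 1)
    (hf0 : ∀ s ∈ Ioo 0 t, 0 ≤ f s) (hf : ∀ s ∈ Ioo 0 t, f s ≤ M * (t / s) ^ p) :
    ∫ s in Ioo 0 t, f s ≤ M * t / (1 - p) := by
  calc ∫ s in Ioo 0 t, f s ≤ ∫ s in Ioo 0 t, M * (t / s) ^ p :=
        setIntegral_mono_of_nonneg hf0 hf ((integrableOn_Ioo_div_rpow ht hp).const_mul M)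
    _ = M * t / (1 - p) := by rw [integral_const_mul, setIntegral_Ioo_div_rpow ht hp, mul_div_assoc]

end DivRpowIntegral

section Pointwise

variable {Φ l : ℝ → ℝ} {α q r t k m s : ℝ}

theorem scaledWeight_max_le_of_rpow_le {K p : ℝ} (hK : 1 ≤ K) (hp : 0 ≤ p)
    (hΦpos : ∀ x, 0 < x → 0 < Φ x) (hlpos : ∀ x, 0 < x → 0 < l x) (hα : 0 < α)
    (hr : 0 < r) (hk : 0 < k) (hm : 0 < m) (hkt : t ^ (1 / α) ≤ k) (hs : s ∈ Ioo 0 t) :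
    scaledWeight q Φ l r k m (max k (s ^ (1 / α)))
      ≤ K * (t / s) ^ p * scaledWeight q Φ l r k m (max k (t ^ (1 / α))) := by
  have hsk : s ^ (1 / α) ≤ k := (Real.rpow_le_rpow hs.1.le hs.2.le (by positivity)).trans hkt
  rw [max_eq_left hsk, max_eq_left hkt]
  exact le_mul_of_one_le_left (scaledWeight_nonneg hΦpos hlpos hr hk hm hk)
    (one_le_mul_of_one_le_of_one_le hK (Real.one_le_rpow ((one_le_div hs.1).2 hs.2.le) hp))

theorem scaledWeight_max_le_of_lt_rpow {b ε CΦ Cl : ℝ} (hCΦ : 0 ≤ CΦ) (hCl : 0 ≤ Cl)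
    (hΦpos : ∀ x, 0 < x → 0 < Φ x) (hlpos : ∀ x, 0 < x → 0 < l x)
    (hΦ : ∀ x y, 0 < x → x ≤ y → y ≤ 1 → Φ x ≤ CΦ * (x / y) ^ b * Φ y)
    (hl : ∀ x y, 0 < x → x ≤ y → l y ≤ Cl * (y / x) ^ ε * l x) (hα : 0 < α)
    (hr : 0 < r) (htr : t ≤ r ^ α) (hk : 0 < k) (hm : 0 < m) (hkt : k < t ^ (1 / α))
    (hs : s ∈ Ioo 0 t) :
    scaledWeight q Φ l r k m (max k (s ^ (1 / α)))
      ≤ CΦ * Cl * (t / s) ^ (max (q - b + ε) 0 / α)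
        * scaledWeight q Φ l r k m (max k (t ^ (1 / α))) := by
  have hTr : t ^ (1 / α) ≤ r := by
    rw [one_div]
    exact (Real.rpow_inv_le_iff_of_pos (hs.1.trans hs.2).le hr.le hα).2 htr
  set T := t ^ (1 / α)
  set w := max k (s ^ (1 / α))
  set a := q - b + ε
  have hs0 := Real.rpow_pos_of_pos hs.1 (1 / α)
  have hw : 0 < w := hk.trans_le (le_max_left _ _)
  have hwT : w ≤ T := max_le hkt.le (Real.rpow_le_rpow hs.1.le hs.2.le (by positivity))
  have hpow : (T / w) ^ a ≤ (t / s) ^ (max a 0 / α) :=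
    calc (T / w) ^ a ≤ (T / w) ^ max a 0 :=
          Real.rpow_le_rpow_of_exponent_le ((one_le_div hw).2 hwT) (le_max_left _ _)
      _ ≤ (T / s ^ (1 / α)) ^ max a 0 :=
          Real.rpow_le_rpow (div_pos (hw.trans_le hwT) hw).le
            (div_le_div_of_nonneg_left (hw.trans_le hwT).le hs0 (le_max_right _ _))
            (le_max_right _ _)
      _ = (t / s) ^ (max a 0 / α) := by
          rw [← Real.div_rpow (hs.1.trans hs.2).le hs.1.le, ← Real.rpow_mul (div_pos (hs.1.trans hs.2) hs.1).le,
            one_div_mul_eq_div]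
  rw [max_eq_right hkt.le]
  calc scaledWeight q Φ l r k m w ≤ CΦ * Cl * (T / w) ^ a * scaledWeight q Φ l r k m T :=
        scaledWeight_le_of_le hΦpos hlpos hΦ hl hk hm hw hwT hTr
    _ ≤ CΦ * Cl * (t / s) ^ (max a 0 / α) * scaledWeight q Φ l r k m T := by
        have := scaledWeight_nonneg (q := q) hΦpos hlpos hr hk hm (hw.trans_le hwT)
        gcongr

end Pointwise

theorem exists_scaledWeight_max_le {Φ l : ℝ → ℝ} {α β q : ℝ} (hα : 0 < α)
    (hΦpos : ∀ x, 0 < x → 0 < Φ x) (hΦlow : ∀ b < β, HasLowerScaling Φ b)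
    (hlpos : ∀ x, 0 < x → 0 < l x) (hlone : ∀ x, 1 ≤ x → l x = 1)
    (hlscale : SlowlyVaryingScaling l) :
    ∃ K p : ℝ, 0 < K ∧ p < 1 ∧ ∀ r t k m s, 0 < r → t ≤ r ^ α → 0 < k → 0 < m →
      (t ^ (1 / α) ≤ k ∨ q < α + β) → s ∈ Ioo 0 t →
        scaledWeight q Φ l r k m (max k (s ^ (1 / α)))
          ≤ K * (t / s) ^ p * scaledWeight q Φ l r k m (max k (t ^ (1 / α))) := by
  by_cases hqβ : q < α + β
  · -- with `b = β - ε` the exponent `q - b + ε` equals `α - ε < α`, so `(t/s)^p` is integrable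
    set ε := (α + β - q) / 3 with hε_def
    have hε : 0 < ε := by positivity
    obtain ⟨CΦ, hCΦ, hΦ⟩ := (hΦlow (β - ε) (by linarith)).exists_le_mul_rpow hΦpos
    obtain ⟨Cl, hCl, hl⟩ :=
      (hlscale.hasUpperScaling hε).exists_le_mul_rpow_of_eq_one hε.le hlpos hlone
    refine ⟨CΦ * Cl, max (q - (β - ε) + ε) 0 / α, by positivity,
      (div_lt_one hα).2 (max_lt (by linarith [hε_def]) hα), fun r t k m s hr htr hk hm _ hs => ?_⟩
    rcases le_or_gt (t ^ (1 / α)) k with hkt | hkt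
    · exact scaledWeight_max_le_of_rpow_le (one_le_mul_of_one_le_of_one_le hCΦ hCl)
        (by positivity) hΦpos hlpos hα hr hk hm hkt hs
    · exact scaledWeight_max_le_of_lt_rpow (by positivity) (by positivity) hΦpos hlpos hΦ hl hα
        hr htr hk hm hkt hs
  · exact ⟨1, 0, one_pos, one_pos, fun r t k m s hr _ hk hm hkt hs =>
      scaledWeight_max_le_of_rpow_le le_rfl le_rfl hΦpos hlpos hα hr hk hm
        (hkt.resolve_right hqβ) hs⟩

theorem setIntegral_le_of_scaledWeight_max_le {Φ l : ℝ → ℝ} {α q r t k m K p : ℝ}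
    (hΦpos : ∀ x, 0 < x → 0 < Φ x) (hlpos : ∀ x, 0 < x → 0 < l x)
    (hr : 0 < r) (ht : 0 < t) (hk : 0 < k) (hm : 0 < m) (hp : p < 1)
    (h : ∀ s ∈ Ioo 0 t, scaledWeight q Φ l r k m (max k (s ^ (1 / α)))
      ≤ K * (t / s) ^ p * scaledWeight q Φ l r k m (max k (t ^ (1 / α)))) :
    (∫ s in Ioo 0 t,
        min 1 (k / s ^ (1 / α)) ^ q * Φ (max k (s ^ (1 / α)) / r) * l (m / max k (s ^ (1 / α))))
      ≤ K / (1 - p) * t * min 1 (k / t ^ (1 / α)) ^ q * Φ (max k (t ^ (1 / α)) / r) *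
          l (m / max k (t ^ (1 / α))) := by
  have hpos : ∀ s ∈ Ioo 0 t, 0 < s ^ (1 / α) := fun s hs => Real.rpow_pos_of_pos hs.1 _
  calc (∫ s in Ioo 0 t,
        min 1 (k / s ^ (1 / α)) ^ q * Φ (max k (s ^ (1 / α)) / r) * l (m / max k (s ^ (1 / α))))
      = ∫ s in Ioo 0 t, scaledWeight q Φ l r k m (max k (s ^ (1 / α))) :=
        setIntegral_congr_fun measurableSet_Ioo fun s hs =>
          min_one_div_rpow_mul_eq_scaledWeight hk (hpos s hs)
    _ ≤ K * scaledWeight q Φ l r k m (max k (t ^ (1 / α))) * t / (1 - p) :=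
        setIntegral_Ioo_le_of_le_mul_div_rpow ht hp
          (fun s hs => scaledWeight_nonneg hΦpos hlpos hr hk hm (hk.trans_le (le_max_left _ _)))
          fun s hs => (h s hs).trans_eq (by ring)
    _ = _ := by
        rw [← min_one_div_rpow_mul_eq_scaledWeight hk (Real.rpow_pos_of_pos ht _)]
        ring

theorem statement_12_general
    (α β : ℝ) (hα0 : 0 < α)
    (Φ l : ℝ → ℝ)
    (hΦ : StdFun Φ)
    (hΦlow : LowerIndexIs Φ β)
    (hl : StdFun l) (hlscale : SlowlyVaryingScaling l)
    (q : ℝ) :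
    ∃ C : ℝ, 0 < C ∧
      ∀ r t k m : ℝ, 0 < r → 0 < t → t ≤ r ^ α → 0 < k → 0 < m →
        (t ^ (1 / α) ≤ k ∨ q < α + β) →
        (∫ s in Set.Ioo (0 : ℝ) t,
            min 1 (k / s ^ (1 / α)) ^ q * Φ (max k (s ^ (1 / α)) / r) *
              l (m / max k (s ^ (1 / α))))
          ≤ C * t * min 1 (k / t ^ (1 / α)) ^ q * Φ (max k (t ^ (1 / α)) / r) *
              l (m / max k (t ^ (1 / α))) := by
  obtain ⟨-, hΦpos, -⟩ := hΦ
  obtain ⟨-, hlpos, hlone⟩ := hl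
  obtain ⟨K, p, hK, hp, hbound⟩ :=
    exists_scaledWeight_max_le (q := q) hα0 hΦpos hΦlow.1 hlpos hlone hlscale
  refine ⟨K / (1 - p), div_pos hK (sub_pos.2 hp), fun r t k m hr ht htr hk hm hkq => ?_⟩
  exact setIntegral_le_of_scaledWeight_max_le hΦpos hlpos hr ht hk hm hp fun s hs =>
    hbound r t k m s hr htr hk hm hkq hs

/-- Lemma 8.2, inequality for `ℓ(m/(k∨s^{1/α}))`. -/
theorem statement_12
    (α β βs : ℝ) (hα0 : 0 < α) (hα2 : α < 2) (hβ : 0 ≤ β) (hβs : β ≤ βs)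
    (Φ l : ℝ → ℝ)
    (hΦ : StdFun Φ) (hΦinc : AlmostIncreasingOn01 Φ)
    (hΦlow : LowerIndexIs Φ β) (hΦup : UpperIndexIs Φ βs)
    (hl : StdFun l) (hlscale : SlowlyVaryingScaling l)
    (q : ℝ) (hq : 0 ≤ q) :
    ∃ C : ℝ, 0 < C ∧
      ∀ r t k m : ℝ, 0 < r → 0 < t → t ≤ r ^ α → 0 < k → 0 < m →
        (t ^ (1 / α) ≤ k ∨ q < α + β) →
        (∫ s in Set.Ioo (0 : ℝ) t,
            min 1 (k / s ^ (1 / α)) ^ q * Φ (max k (s ^ (1 / α)) / r) *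
              l (m / max k (s ^ (1 / α))))
          ≤ C * t * min 1 (k / t ^ (1 / α)) ^ q * Φ (max k (t ^ (1 / α)) / r) *
              l (m / max k (t ^ (1 / α))) :=
  statement_12_general α β hα0 Φ l hΦ hΦlow hl hlscale q
end
end
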